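/- arXiv:1311.3658 — 3 statements merged into one kernel-verified Lean document; each statement's English description precedes it below -/
import Mathlib

section
/- The map I_h is invariant under the Reidemeister 1 and pseudo-Reidemeister 1 moves regardless of signs: if P′ (with m+1 crossings) has a chord e (classical with either sign, or a prechord) whose two endpoints are cyclically adjacent, and deleting e together with its two endpoints from P′ (renumbering the remaining 2m points in cyclic order) yields P, then I_h(P′) and I_h(P) are equivalent ℤ/2-labeled chord diagrams. -/
/-!
Formalization framework for pseudo-Gauss diagrams (Gauss diagrams of
virtual pseudoknots), the interlacement-based invariants `I` and `I_h`,
and the Gauss-diagrammatic Reidemeister moves.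
-/

noncomputable section
open scoped Classical

/-- The cyclic successor of a point on the circle `Fin n` (i.e. `x + 1` mod `n`),
so that `x` and `csucc x` are cyclically adjacent. -/
def csucc {n : ℕ} (x : Fin n) : Fin n :=
  ⟨(x.val + 1) % n, Nat.mod_lt _ x.pos⟩

/-- `CycBtw a x b` : the point `x` lies in the open cyclic interval from `a` to `b`. -/
def CycBtw {n : ℕ} (a x b : Fin n) : Prop :=
  if a < b then a < x ∧ x < b else x < b ∨ a < x

/-- Two chords `c` and `d` (recorded as two-element finsets of points) are
interlaced if exactly one endpoint of `d` lies in the open cyclic interval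
determined by the two endpoints of `c`. -/
def Interlaced {n : ℕ} (c d : Finset (Fin n)) : Prop :=
  ∃ a b : Fin n, a ≠ b ∧ c = {a, b} ∧ (d.filter fun x => CycBtw a x b).card = 1

/-- A pseudo-Gauss diagram with `m` crossings: the points of `Fin (2*m)` in their
natural cyclic order, partitioned into `m` two-element chords; each chord is either
classical or a prechord (member of `pre`), and each classical chord carries a
sign `±1`. -/
structure PGD (m : ℕ) where
  /-- the chords, a partition of `Fin (2*m)` into two-element subsets -/
  chords : Finset (Finset (Fin (2 * m)))
  two_mem : ∀ c ∈ chords, c.card = 2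
  partition : ∀ x : Fin (2 * m), ∃! c, c ∈ chords ∧ x ∈ c
  /-- the prechords -/
  pre : Finset (Finset (Fin (2 * m)))
  pre_sub : pre ⊆ chords
  /-- the sign, relevant on classical chords -/
  sign : Finset (Fin (2 * m)) → ℤ
  sign_pm : ∀ c ∈ chords \ pre, sign c = 1 ∨ sign c = -1

namespace PGD

/-- The classical chords of a pseudo-Gauss diagram. -/
def classicalChords {m : ℕ} (P : PGD m) : Finset (Finset (Fin (2 * m))) :=
  P.chords \ P.pre

/-- `i(c)` : the sum of the signs of the classical chords interlaced with `c`. -/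
def iLabel {m : ℕ} (P : PGD m) (c : Finset (Fin (2 * m))) : ℤ :=
  ∑ d ∈ P.classicalChords.filter (fun d => Interlaced c d), P.sign d

/-- `p(c)` : the parity (in `ℤ/2`) of the number of classical chords interlaced with `c`. -/
def pLabel {m : ℕ} (P : PGD m) (c : Finset (Fin (2 * m))) : ZMod 2 :=
  ((P.classicalChords.filter (fun d => Interlaced c d)).card : ZMod 2)

/-- The endpoints of the prechords of `P`. -/
def preEndpoints {m : ℕ} (P : PGD m) : Finset (Fin (2 * m)) :=
  P.pre.sup id

/-- The renumbering (in cyclic order, starting from `0`) of the prechord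
endpoints of `P`. -/
def idx {m : ℕ} (P : PGD m) (x : Fin (2 * m)) : ℕ :=
  (P.preEndpoints.filter fun y => y < x).card

end PGD

/-- A labeled chord diagram with labels in `α`: points `0, 1, …, points - 1`
in their natural cyclic order, a collection of chords, and a label attached
to each chord. -/
structure LCD (α : Type) where
  points : ℕ
  chords : Finset (Finset ℕ)
  label : Finset ℕ → α

/-- Well-formedness of a labeled chord diagram: the chords are two-element
subsets of `{0, …, points-1}` partitioning the point set. -/
def LCD.WF {α : Type} (D : LCD α) : Prop :=
  (∀ c ∈ D.chords, ∀ x ∈ c, x < D.points) ∧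
  (∀ c ∈ D.chords, c.card = 2) ∧
  (∀ x, x < D.points → ∃! c, c ∈ D.chords ∧ x ∈ c)

/-- A bijection of the point sets preserving the cyclic order, the chords and
the labels (a cyclic-order-preserving bijection of `{0,…,N-1}` is a rotation). -/
def RotMove {α : Type} (D D' : LCD α) : Prop :=
  D.points = D'.points ∧
  ∃ t : ℕ,
    D'.chords = D.chords.image (fun c => c.image fun x => (x + t) % D.points) ∧
    ∀ c ∈ D.chords, D'.label (c.image fun x => (x + t) % D.points) = D.label c

/-- Insertion of a chord with cyclically adjacent endpoints and label `0`
(at the canonical position: the two new points come last); its inverse is the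
deletion of such a chord together with its two endpoints.  Together with
`RotMove` this generates insertion/deletion at an arbitrary cyclic position. -/
def InsMove {α : Type} [Zero α] (D D' : LCD α) : Prop :=
  D'.points = D.points + 2 ∧
  ({D.points, D.points + 1} : Finset ℕ) ∉ D.chords ∧
  D'.chords = insert ({D.points, D.points + 1} : Finset ℕ) D.chords ∧
  D'.label ({D.points, D.points + 1} : Finset ℕ) = 0 ∧
  ∀ c ∈ D.chords, D'.label c = D.label c

/-- One step of equivalence of (well-formed) labeled chord diagrams. -/
def LCDStep {α : Type} [Zero α] (D D' : LCD α) : Prop :=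
  D.WF ∧ D'.WF ∧ (RotMove D D' ∨ InsMove D D' ∨ InsMove D' D)

/-- Equivalence of labeled chord diagrams: the equivalence relation generated by
cyclic-order-preserving bijections and insertion/deletion of `0`-labeled chords
with cyclically adjacent endpoints. -/
def LCDEquiv {α : Type} [Zero α] : LCD α → LCD α → Prop :=
  Relation.EqvGen LCDStep

/-- The invariant `I` : the `ℤ`-labeled chord diagram whose points are the
endpoints of the prechords of `P` (with the induced cyclic order), whose chords
are the prechords of `P`, and whose label on each prechord `c` is `i(c)`. -/
def PGD.Imap {m : ℕ} (P : PGD m) : LCD ℤ where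
  points := P.preEndpoints.card
  chords := P.pre.image fun c => c.image P.idx
  label := fun c' => ∑ c ∈ P.pre.filter (fun c => c.image P.idx = c'), P.iLabel c

/-- The invariant `I_h` : the `ℤ/2`-labeled chord diagram whose points are the
endpoints of the prechords of `P`, whose chords are the prechords of `P`, and
whose label on each prechord `c` is `p(c)`. -/
def PGD.Ihmap {m : ℕ} (P : PGD m) : LCD (ZMod 2) where
  points := P.preEndpoints.card
  chords := P.pre.image fun c => c.image P.idx
  label := fun c' => ∑ c ∈ P.pre.filter (fun c => c.image P.idx = c'), P.pLabel c

/-- The renumbering of the points remaining after deleting the points of `E`: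
the new index of `x` is obtained by collapsing, in cyclic order, the deleted
points below `x`. -/
def ren {n : ℕ} (E : Finset (Fin n)) (x : Fin n) : ℕ :=
  x.val - (E.filter fun y => y < x).card

/-- `Reduces P' R P` : the pseudo-Gauss diagram `P` is obtained from `P'` by
deleting the chords of `R` together with all of their endpoints, renumbering
the remaining points in cyclic order, and keeping all markings and signs. -/
def Reduces {m' m : ℕ} (P' : PGD m') (R : Finset (Finset (Fin (2 * m')))) (P : PGD m) : Prop :=
  R ⊆ P'.chords ∧
  (∀ c ∈ P'.chords, c ∉ R →
    ∃ c' ∈ P.chords,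
      c.image (ren (R.sup id)) = c'.image Fin.val ∧
      (c ∈ P'.pre ↔ c' ∈ P.pre) ∧
      P'.sign c = P.sign c') ∧
  (∀ c' ∈ P.chords, ∃ c ∈ P'.chords, c ∉ R ∧ c.image (ren (R.sup id)) = c'.image Fin.val)

/-- The permutation of the points transposing `p ↔ p+1`, `q ↔ q+1` and `r ↔ r+1`. -/
def tripleSwap {n : ℕ} (p q r : Fin n) (x : Fin n) : Fin n :=
  Equiv.swap p (csucc p) (Equiv.swap q (csucc q) (Equiv.swap r (csucc r) x))

/-- The Reidemeister 3 move on pseudo-Gauss diagrams: `{p, p+1}`, `{q, q+1}`,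
`{r, r+1}` are pairwise disjoint pairs of cyclically adjacent points whose union
is the union of three classical chords of `P`, and `P'` is obtained from `P` by
applying the permutation transposing the points within each pair to all chord
endpoints, keeping all markings and signs. -/
def R3Hyp {m : ℕ} (P P' : PGD m) (p q r : Fin (2 * m)) : Prop :=
  Disjoint ({p, csucc p} : Finset (Fin (2 * m))) {q, csucc q} ∧
  Disjoint ({p, csucc p} : Finset (Fin (2 * m))) {r, csucc r} ∧
  Disjoint ({q, csucc q} : Finset (Fin (2 * m))) {r, csucc r} ∧
  (∃ c₁ ∈ P.classicalChords, ∃ c₂ ∈ P.classicalChords, ∃ c₃ ∈ P.classicalChords,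
    ({p, csucc p} ∪ {q, csucc q} ∪ {r, csucc r} : Finset (Fin (2 * m))) = c₁ ∪ c₂ ∪ c₃) ∧
  P'.chords = P.chords.image (fun c => c.image (tripleSwap p q r)) ∧
  P'.pre = P.pre.image (fun c => c.image (tripleSwap p q r)) ∧
  ∀ c ∈ P.chords, P'.sign (c.image (tripleSwap p q r)) = P.sign c

namespace AuxR1

/-- rank function: number of elements of `A` below `x`. -/
lemma rank_lt_rank {n : ℕ} {A : Finset (Fin n)} {x y : Fin n} (hx : x ∈ A) (hxy : x < y) :
    (A.filter (· < x)).card < (A.filter (· < y)).card := by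
  have hsub : A.filter (· < x) ⊆ A.filter (· < y) := by
    intro z hz
    simp only [Finset.mem_filter] at hz ⊢
    exact ⟨hz.1, lt_trans hz.2 hxy⟩
  exact Finset.card_lt_card ((Finset.ssubset_iff_of_subset hsub).mpr
    ⟨x, by simp [hx, hxy], by simp⟩)

lemma rank_le_rank {n : ℕ} {A : Finset (Fin n)} {x y : Fin n} (hxy : x ≤ y) :
    (A.filter (· < x)).card ≤ (A.filter (· < y)).card :=
  Finset.card_le_card (by
    intro z hz
    simp only [Finset.mem_filter] at hz ⊢
    exact ⟨hz.1, lt_of_lt_of_le hz.2 hxy⟩)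

lemma rank_lt_iff {n : ℕ} {A : Finset (Fin n)} {x y : Fin n} (hx : x ∈ A) :
    (A.filter (· < x)).card < (A.filter (· < y)).card ↔ x < y := by
  constructor
  · intro h
    by_contra hxy
    exact absurd (rank_le_rank (le_of_not_gt hxy)) (not_le_of_gt h)
  · exact rank_lt_rank hx

lemma rank_injOn {n : ℕ} {A : Finset (Fin n)} {x y : Fin n} (hx : x ∈ A) (hy : y ∈ A)
    (h : (A.filter (· < x)).card = (A.filter (· < y)).card) : x = y := by
  rcases lt_trichotomy x y with h1 | h1 | h1
  · exact absurd (rank_lt_rank hx h1) (by omega)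
  · exact h1
  · exact absurd (rank_lt_rank hy h1) (by omega)

lemma rank_lt_card {n : ℕ} {A : Finset (Fin n)} {x : Fin n} (hx : x ∈ A) :
    (A.filter (· < x)).card < A.card := by
  have hsub : A.filter (· < x) ⊆ A.erase x := by
    intro z hz
    simp only [Finset.mem_filter] at hz
    exact Finset.mem_erase.mpr ⟨ne_of_lt hz.2, hz.1⟩
  calc (A.filter (· < x)).card ≤ (A.erase x).card := Finset.card_le_card hsub
    _ < A.card := Finset.card_erase_lt_of_mem hx

lemma rank_surj {n : ℕ} {A : Finset (Fin n)} {j : ℕ} (hj : j < A.card) :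
    ∃ x ∈ A, (A.filter (· < x)).card = j := by
  have := Finset.surj_on_of_inj_on_of_card_le (s := A) (t := Finset.range A.card)
    (fun x _ => (A.filter (· < x)).card)
    (fun a ha => Finset.mem_range.mpr (rank_lt_card ha))
    (fun a₁ a₂ ha₁ ha₂ h => rank_injOn ha₁ ha₂ h)
    (by simp) j (Finset.mem_range.mpr hj)
  obtain ⟨a, ha, h⟩ := this
  exact ⟨a, ha, h.symm⟩

/-- pair set equality decomposition -/
lemma pair_eq_pair {α : Type*} [DecidableEq α] {a b c d : α} (hab : a ≠ b)
    (h : ({a, b} : Finset α) = {c, d}) : (a = c ∧ b = d) ∨ (a = d ∧ b = c) := by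
  have ha : a ∈ ({c, d} : Finset α) := h ▸ (by simp)
  have hb : b ∈ ({c, d} : Finset α) := h ▸ (by simp)
  have hc : c ∈ ({a, b} : Finset α) := h ▸ (by simp)
  have hd : d ∈ ({a, b} : Finset α) := h ▸ (by simp)
  simp only [Finset.mem_insert, Finset.mem_singleton] at ha hb hc hd
  rcases ha with rfl | rfl
  · rcases hd with rfl | rfl
    · rcases hb with rfl | rfl <;> tauto
    · tauto
  · rcases hc with rfl | rfl <;> tauto

lemma filter_pair_card_one {α : Type*} [DecidableEq α] (p : α → Prop) [DecidablePred p]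
    {a b : α} (h : a ≠ b) :
    ((({a, b} : Finset α)).filter p).card = 1 ↔ (p a ↔ ¬ p b) := by
  rw [Finset.filter_insert, Finset.filter_singleton]
  by_cases ha : p a <;> by_cases hb : p b <;>
    simp [ha, hb, h, Finset.card_insert_of_notMem]

/-- ℕ-version of CycBtw -/
def CycBtwN (a x b : ℕ) : Prop := if a < b then a < x ∧ x < b else x < b ∨ a < x

def InterlacedN (c d : Finset ℕ) : Prop :=
  ∃ a b : ℕ, a ≠ b ∧ c = {a, b} ∧ (d.filter fun x => CycBtwN a x b).card = 1

lemma cycBtw_iff_cycBtwN {k : ℕ} {a x b : Fin k} (f : Fin k → ℕ)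
    (hab : a < b ↔ f a < f b) (hax : a < x ↔ f a < f x) (hxb : x < b ↔ f x < f b) :
    CycBtw a x b ↔ CycBtwN (f a) (f x) (f b) := by
  unfold CycBtw CycBtwN
  by_cases h : a < b
  · rw [if_pos h, if_pos (hab.mp h), hax, hxb]
  · rw [if_neg h, if_neg (fun h' => h (hab.mpr h')), hax, hxb]

lemma interlaced_iff_interlacedN {k : ℕ} {c d : Finset (Fin k)} (f : Fin k → ℕ)
    (hmono : ∀ x ∈ c ∪ d, ∀ y ∈ c ∪ d, x < y ↔ f x < f y) :
    Interlaced c d ↔ InterlacedN (c.image f) (d.image f) := by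
  have hinj : ∀ x ∈ c ∪ d, ∀ y ∈ c ∪ d, f x = f y → x = y := by
    intro x hx y hy hf
    rcases lt_trichotomy x y with h | h | h
    · exact absurd ((hmono x hx y hy).mp h) (by omega)
    · exact h
    · exact absurd ((hmono y hy x hx).mp h) (by omega)
  constructor
  · rintro ⟨a, b, hab, rfl, hcard⟩
    have hac : a ∈ ({a, b} : Finset (Fin k)) ∪ d := by simp
    have hbc : b ∈ ({a, b} : Finset (Fin k)) ∪ d := by simp
    refine ⟨f a, f b, fun h => hab (hinj a hac b hbc h), by simp [Finset.image_insert], ?_⟩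
    rw [Finset.filter_image]
    rw [Finset.card_image_of_injOn (fun x hx y hy h =>
      hinj x (Finset.mem_union_right _ (Finset.mem_filter.mp hx).1)
            y (Finset.mem_union_right _ (Finset.mem_filter.mp hy).1) h)]
    rw [← hcard]
    apply congrArg
    apply Finset.filter_congr
    intro x hx
    have hxm : x ∈ ({a, b} : Finset (Fin k)) ∪ d := Finset.mem_union_right _ hx
    exact (cycBtw_iff_cycBtwN f (hmono a hac b hbc) (hmono a hac x hxm)
      (hmono x hxm b hbc)).symm
  · rintro ⟨a', b', hab', himg, hcard⟩
    have ha' : a' ∈ c.image f := himg ▸ (by simp)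
    have hb' : b' ∈ c.image f := himg ▸ (by simp)
    obtain ⟨a, ha, rfl⟩ := Finset.mem_image.mp ha'
    obtain ⟨b, hb, rfl⟩ := Finset.mem_image.mp hb'
    have hac : a ∈ c ∪ d := Finset.mem_union_left _ ha
    have hbc : b ∈ c ∪ d := Finset.mem_union_left _ hb
    have hab : a ≠ b := fun h => hab' (h ▸ rfl)
    have hceq : c = {a, b} := by
      apply Finset.Subset.antisymm
      · intro z hz
        have : f z ∈ ({f a, f b} : Finset ℕ) := himg ▸ Finset.mem_image_of_mem f hz
        simp only [Finset.mem_insert, Finset.mem_singleton] at this ⊢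
        rcases this with h | h
        · exact Or.inl (hinj z (Finset.mem_union_left _ hz) a hac h)
        · exact Or.inr (hinj z (Finset.mem_union_left _ hz) b hbc h)
      · intro z hz
        simp only [Finset.mem_insert, Finset.mem_singleton] at hz
        rcases hz with rfl | rfl <;> assumption
    refine ⟨a, b, hab, hceq, ?_⟩
    rw [Finset.filter_image] at hcard
    rw [Finset.card_image_of_injOn (fun x hx y hy h =>
      hinj x (Finset.mem_union_right _ (Finset.mem_filter.mp hx).1)
            y (Finset.mem_union_right _ (Finset.mem_filter.mp hy).1) h)] at hcard
    rw [← hcard]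
    apply congrArg
    apply Finset.filter_congr
    intro x hx
    have hxm : x ∈ c ∪ d := Finset.mem_union_right _ hx
    exact (cycBtw_iff_cycBtwN f (hmono a hac b hbc) (hmono a hac x hxm)
      (hmono x hxm b hbc))

end AuxR1

namespace AuxR1

variable {mm : ℕ} (Q : PGD mm)

lemma chord_eq_of_mem {c d : Finset (Fin (2*mm))} (hc : c ∈ Q.chords) (hd : d ∈ Q.chords)
    {x : Fin (2*mm)} (hxc : x ∈ c) (hxd : x ∈ d) : c = d := by
  obtain ⟨u, _, hun⟩ := Q.partition x
  rw [hun c ⟨hc, hxc⟩, hun d ⟨hd, hxd⟩]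

lemma mem_preEndpoints {x : Fin (2*mm)} :
    x ∈ Q.preEndpoints ↔ ∃ c ∈ Q.pre, x ∈ c := by
  unfold PGD.preEndpoints
  simp [Finset.mem_sup]

lemma idx_inj {x y : Fin (2*mm)} (hx : x ∈ Q.preEndpoints) (hy : y ∈ Q.preEndpoints)
    (h : Q.idx x = Q.idx y) : x = y := rank_injOn hx hy h

lemma idx_lt_card {x : Fin (2*mm)} (hx : x ∈ Q.preEndpoints) :
    Q.idx x < Q.preEndpoints.card := rank_lt_card hx

lemma idx_lt_iff {x y : Fin (2*mm)} (hx : x ∈ Q.preEndpoints) :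
    Q.idx x < Q.idx y ↔ x < y := rank_lt_iff hx

lemma pre_card_two {c : Finset (Fin (2*mm))} (hc : c ∈ Q.pre) : c.card = 2 :=
  Q.two_mem c (Q.pre_sub hc)

lemma pre_subset_preEndpoints {c : Finset (Fin (2*mm))} (hc : c ∈ Q.pre)
    {x : Fin (2*mm)} (hx : x ∈ c) : x ∈ Q.preEndpoints :=
  (mem_preEndpoints Q).mpr ⟨c, hc, hx⟩

lemma image_idx_inj {c₁ c₂ : Finset (Fin (2*mm))} (h₁ : c₁ ∈ Q.pre) (h₂ : c₂ ∈ Q.pre)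
    (h : c₁.image Q.idx = c₂.image Q.idx) : c₁ = c₂ := by
  have hne : c₁.Nonempty := Finset.card_pos.mp (by rw [pre_card_two Q h₁]; omega)
  obtain ⟨x, hx⟩ := hne
  have hmem : Q.idx x ∈ c₂.image Q.idx := h ▸ Finset.mem_image_of_mem _ hx
  obtain ⟨y, hy, hyx⟩ := Finset.mem_image.mp hmem
  have hyx' : y = x := idx_inj Q (pre_subset_preEndpoints Q h₂ hy)
    (pre_subset_preEndpoints Q h₁ hx) hyx
  exact chord_eq_of_mem Q (Q.pre_sub h₁) (Q.pre_sub h₂) hx (hyx' ▸ hy)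

lemma Ihmap_label {c₁ : Finset (Fin (2*mm))} (hc₁ : c₁ ∈ Q.pre) :
    Q.Ihmap.label (c₁.image Q.idx) = Q.pLabel c₁ := by
  show (∑ c ∈ Q.pre.filter (fun c => c.image Q.idx = c₁.image Q.idx), Q.pLabel c) = _
  have h : Q.pre.filter (fun c => c.image Q.idx = c₁.image Q.idx) = {c₁} := by
    ext c
    simp only [Finset.mem_filter, Finset.mem_singleton]
    constructor
    · rintro ⟨hc, h⟩; exact image_idx_inj Q hc hc₁ h
    · rintro rfl; exact ⟨hc₁, rfl⟩
  rw [h, Finset.sum_singleton]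

lemma Ihmap_WF : Q.Ihmap.WF := by
  refine ⟨?_, ?_, ?_⟩
  · rintro c₀ hc₀ x hx
    obtain ⟨c, hc, rfl⟩ := Finset.mem_image.mp hc₀
    obtain ⟨y, hy, rfl⟩ := Finset.mem_image.mp hx
    exact idx_lt_card Q (pre_subset_preEndpoints Q hc hy)
  · rintro c₀ hc₀
    obtain ⟨c, hc, rfl⟩ := Finset.mem_image.mp hc₀
    rw [Finset.card_image_of_injOn (fun x hx y hy h =>
      idx_inj Q (pre_subset_preEndpoints Q hc hx) (pre_subset_preEndpoints Q hc hy) h)]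
    exact pre_card_two Q hc
  · intro x hx
    obtain ⟨y, hy, rfl⟩ := rank_surj hx
    obtain ⟨c, hc, hyc⟩ := (mem_preEndpoints Q).mp hy
    refine ⟨c.image Q.idx, ⟨Finset.mem_image_of_mem _ hc, Finset.mem_image_of_mem _ hyc⟩, ?_⟩
    rintro d₀ ⟨hd₀, hxd₀⟩
    obtain ⟨d, hd, rfl⟩ := Finset.mem_image.mp hd₀
    obtain ⟨z, hz, hzy⟩ := Finset.mem_image.mp hxd₀
    have hzy' : z = y := idx_inj Q (pre_subset_preEndpoints Q hd hz) hy hzy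
    have hdc : d = c := chord_eq_of_mem Q (Q.pre_sub hd) (Q.pre_sub hc) (hzy' ▸ hz) hyc
    rw [hdc]

/-! ### rotation of a labeled chord diagram -/

def rotate (D : LCD (ZMod 2)) (r : ℕ) : LCD (ZMod 2) where
  points := D.points
  chords := D.chords.image (fun c => c.image fun x => (x + r) % D.points)
  label := fun c => D.label (c.image fun x => (x + (D.points - r % D.points)) % D.points)

lemma mod_add_cancel {p a b x : ℕ} (hx : x < p) (h : (a + b) % p = 0) :
    ((x + a) % p + b) % p = x := by
  rw [Nat.mod_add_mod, add_assoc, Nat.add_mod, h, Nat.add_zero, Nat.mod_mod_of_dvd _ (dvd_refl p),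
    Nat.mod_eq_of_lt hx]

lemma key_mod {p r : ℕ} (hp : 0 < p) : (r + (p - r % p)) % p = 0 := by
  have h1 : r % p < p := Nat.mod_lt _ hp
  have h2 : p * (r / p) + r % p = r := Nat.div_add_mod r p
  have h3 : r + (p - r % p) = p * (r / p + 1) := by
    rw [Nat.mul_add, Nat.mul_one]
    omega
  rw [h3, Nat.mul_mod_right]

lemma key_mod' {p r : ℕ} (hp : 0 < p) : ((p - r % p) + r) % p = 0 := by
  rw [Nat.add_comm]; exact key_mod hp

lemma shift_unshift {p r x : ℕ} (hp : 0 < p) (hx : x < p) :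
    ((x + r) % p + (p - r % p)) % p = x :=
  mod_add_cancel hx (key_mod hp)

lemma unshift_shift {p r x : ℕ} (hp : 0 < p) (hx : x < p) :
    ((x + (p - r % p)) % p + r) % p = x :=
  mod_add_cancel hx (key_mod' hp)

lemma shift_injOn {p r x y : ℕ} (hp : 0 < p) (hx : x < p) (hy : y < p)
    (h : (x + r) % p = (y + r) % p) : x = y := by
  have h2 := shift_unshift (r := r) hp hx
  rw [h, shift_unshift hp hy] at h2
  exact h2.symm

lemma rotate_WF {D : LCD (ZMod 2)} (hWF : D.WF) (r : ℕ) : (rotate D r).WF := by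
  obtain ⟨h1, h2, h3⟩ := hWF
  have hpt : ∀ c ∈ D.chords, 0 < D.points := by
    intro c hc
    obtain ⟨y, hy⟩ := Finset.card_pos.mp (show 0 < c.card by rw [h2 c hc]; omega)
    have := h1 c hc y hy; omega
  refine ⟨?_, ?_, ?_⟩
  · rintro c₀ hc₀ x hx
    obtain ⟨c, hc, rfl⟩ := Finset.mem_image.mp hc₀
    obtain ⟨y, hy, rfl⟩ := Finset.mem_image.mp hx
    exact Nat.mod_lt _ (hpt c hc)
  · rintro c₀ hc₀
    obtain ⟨c, hc, rfl⟩ := Finset.mem_image.mp hc₀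
    rw [Finset.card_image_of_injOn (fun x hx y hy h =>
      shift_injOn (hpt c hc) (h1 c hc x hx) (h1 c hc y hy) h)]
    exact h2 c hc
  · intro x hx
    have hx' : x < D.points := hx
    have hp : 0 < D.points := by omega
    set x₀ := (x + (D.points - r % D.points)) % D.points with hx₀
    have hx₀lt : x₀ < D.points := Nat.mod_lt _ hp
    obtain ⟨c, ⟨hc, hx₀c⟩, hun⟩ := h3 x₀ hx₀lt
    have hsx₀ : (x₀ + r) % D.points = x := unshift_shift hp hx'
    refine ⟨c.image (fun y => (y + r) % D.points),
      ⟨Finset.mem_image_of_mem _ hc, ?_⟩, ?_⟩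
    · show x ∈ c.image (fun y => (y + r) % D.points)
      rw [← hsx₀]
      exact Finset.mem_image_of_mem _ hx₀c
    · rintro d₀ ⟨hd₀, hxd₀⟩
      obtain ⟨d, hd, rfl⟩ := Finset.mem_image.mp hd₀
      obtain ⟨z, hz, hzx⟩ := Finset.mem_image.mp hxd₀
      have hzz : z = x₀ := shift_injOn (hpt d hd) (h1 d hd z hz) hx₀lt (by rw [hzx, hsx₀])
      have hdc := hun d ⟨hd, hzz ▸ hz⟩
      rw [hdc]


lemma rotate_label {D : LCD (ZMod 2)} (hWF : D.WF) (r : ℕ) :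
    ∀ c ∈ D.chords,
      (rotate D r).label (c.image fun x => (x + r) % D.points) = D.label c := by
  intro c hc
  have hp : 0 < D.points := by
    obtain ⟨y, hy⟩ := Finset.card_pos.mp (show 0 < c.card by rw [hWF.2.1 c hc]; omega)
    have := hWF.1 c hc y hy; omega
  show D.label ((c.image fun x => (x + r) % D.points).image
      fun x => (x + (D.points - r % D.points)) % D.points) = D.label c
  congr 1
  rw [Finset.image_image]
  have heq : ∀ x ∈ c, ((fun x => (x + (D.points - r % D.points)) % D.points) ∘
      (fun x => (x + r) % D.points)) x = id x := by
    intro x hx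
    exact shift_unshift hp (hWF.1 c hc x hx)
  rw [Finset.image_congr heq, Finset.image_id]

lemma filter_pair_card {α : Type*} [DecidableEq α] (p : α → Prop) [DecidablePred p]
    {a b : α} (h : a ≠ b) :
    ((({a, b} : Finset α)).filter p).card
      = (if p a then 1 else 0) + (if p b then 1 else 0) := by
  rw [Finset.filter_insert, Finset.filter_singleton]
  by_cases ha : p a <;> by_cases hb : p b <;>
    simp [ha, hb, h, Finset.card_insert_of_notMem]

lemma rotate_rotMove {D : LCD (ZMod 2)} (hWF : D.WF) (r : ℕ) : RotMove D (rotate D r) := by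
  refine ⟨rfl, r, rfl, ?_⟩
  intro c hc
  have hp : 0 < D.points := by
    obtain ⟨y, hy⟩ := Finset.card_pos.mp (show 0 < c.card by rw [hWF.2.1 c hc]; omega)
    have := hWF.1 c hc y hy; omega
  show D.label ((c.image fun x => (x + r) % D.points).image
      fun x => (x + (D.points - r % D.points)) % D.points) = D.label c
  congr 1
  rw [Finset.image_image]
  have heq : ∀ x ∈ c, ((fun x => (x + (D.points - r % D.points)) % D.points) ∘
      (fun x => (x + r) % D.points)) x = id x := by
    intro x hx
    exact shift_unshift hp (hWF.1 c hc x hx)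
  rw [Finset.image_congr heq, Finset.image_id]

end AuxR1


namespace AuxR1

lemma csucc_ne {n : ℕ} (hn : 2 ≤ n) (t : Fin n) : t ≠ csucc t := by
  intro h
  have h1 : (t.val + 1) % n = t.val := congrArg Fin.val h.symm
  by_cases h2 : t.val + 1 < n
  · rw [Nat.mod_eq_of_lt h2] at h1; omega
  · have h3 : t.val + 1 = n := by have := t.isLt; omega
    rw [h3, Nat.mod_self] at h1
    have := t.isLt; omega

lemma csucc_cases {n : ℕ} (t : Fin n) :
    ((csucc t).val = t.val + 1) ∨ ((csucc t).val = 0 ∧ t.val + 1 = n) := by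
  by_cases h : t.val + 1 < n
  · exact Or.inl (Nat.mod_eq_of_lt h)
  · refine Or.inr ⟨?_, by have := t.isLt; omega⟩
    show (t.val + 1) % n = 0
    rw [show t.val + 1 = n by have := t.isLt; omega]
    exact Nat.mod_self n

lemma cycBtw_pair {n : ℕ} (t x : Fin n) (hx1 : x ≠ t) (hx2 : x ≠ csucc t) :
    ¬ CycBtw t x (csucc t) ∧ CycBtw (csucc t) x t := by
  have hxt : x.val ≠ t.val := fun h => hx1 (Fin.ext h)
  have hxs : x.val ≠ (csucc t).val := fun h => hx2 (Fin.ext h)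
  have hxn : x.val < n := x.isLt
  have htn : t.val < n := t.isLt
  have hs := csucc_cases t
  constructor
  · unfold CycBtw
    simp only [Fin.lt_def]
    split_ifs <;> omega
  · unfold CycBtw
    simp only [Fin.lt_def]
    split_ifs <;> omega

lemma cycBtw_t_iff_s {n : ℕ} {t a b : Fin n} (ha1 : a ≠ t) (ha2 : a ≠ csucc t)
    (hb1 : b ≠ t) (hb2 : b ≠ csucc t) :
    CycBtw a t b ↔ CycBtw a (csucc t) b := by
  have hat : a.val ≠ t.val := fun h => ha1 (Fin.ext h)
  have has : a.val ≠ (csucc t).val := fun h => ha2 (Fin.ext h)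
  have hbt : b.val ≠ t.val := fun h => hb1 (Fin.ext h)
  have hbs : b.val ≠ (csucc t).val := fun h => hb2 (Fin.ext h)
  have han : a.val < n := a.isLt
  have hbn : b.val < n := b.isLt
  have htn : t.val < n := t.isLt
  have hs := csucc_cases t
  unfold CycBtw
  simp only [Fin.lt_def]
  split_ifs <;> omega

lemma not_interlaced_E_right {n : ℕ} (hn : 2 ≤ n) (t : Fin n) {d : Finset (Fin n)}
    (hd2 : d.card = 2) (hdis : ∀ x ∈ d, x ≠ t ∧ x ≠ csucc t) :
    ¬ Interlaced ({t, csucc t} : Finset (Fin n)) d := by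
  rintro ⟨a, b, hab, hpair, hcard⟩
  rcases pair_eq_pair (csucc_ne hn t) hpair with ⟨h1, h2⟩ | ⟨h1, h2⟩
  · have hempty : d.filter (fun x => CycBtw a x b) = ∅ := by
      apply Finset.filter_eq_empty_iff.mpr
      intro x hx
      rw [← h1, ← h2]
      exact (cycBtw_pair t x (hdis x hx).1 (hdis x hx).2).1
    rw [hempty] at hcard
    simp at hcard
  · have hfull : d.filter (fun x => CycBtw a x b) = d := by
      apply Finset.filter_true_of_mem
      intro x hx
      rw [← h1, ← h2]
      exact (cycBtw_pair t x (hdis x hx).1 (hdis x hx).2).2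
    rw [hfull, hd2] at hcard
    omega

lemma not_interlaced_E_left {n : ℕ} (hn : 2 ≤ n) (t : Fin n) {d : Finset (Fin n)}
    (hdis : ∀ x ∈ d, x ≠ t ∧ x ≠ csucc t) :
    ¬ Interlaced d ({t, csucc t} : Finset (Fin n)) := by
  rintro ⟨a, b, hab, hd, hcard⟩
  have ha : a ∈ d := hd ▸ (by simp)
  have hb : b ∈ d := hd ▸ (by simp)
  rw [filter_pair_card_one _ (fun h => (csucc_ne hn t) h)] at hcard
  rw [cycBtw_t_iff_s (hdis a ha).1 (hdis a ha).2 (hdis b hb).1 (hdis b hb).2] at hcard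
  tauto

/-! ### the renumbering map -/

lemma ren_eq {n : ℕ} (E : Finset (Fin n)) (x : Fin n) :
    ren E x = ((Finset.univ \ E).filter (· < x)).card := by
  have hIio : (Finset.univ.filter (· < x) : Finset (Fin n)) = Finset.Iio x := by
    ext z; simp
  have hsplit := Finset.card_filter_add_card_filter_not
    (s := (Finset.univ.filter (· < x) : Finset (Fin n))) (p := (· ∈ E))
  have he1 : ((Finset.univ.filter (· < x) : Finset (Fin n))).filter (· ∈ E)
      = E.filter (· < x) := by
    ext z; simp only [Finset.mem_filter, Finset.mem_univ, true_and]; tauto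
  have he2 : ((Finset.univ.filter (· < x) : Finset (Fin n))).filter (fun z => ¬ z ∈ E)
      = (Finset.univ \ E).filter (· < x) := by
    ext z
    simp only [Finset.mem_filter, Finset.mem_univ, true_and, Finset.mem_sdiff]
    tauto
  rw [he1, he2, hIio, Fin.card_Iio] at hsplit
  unfold ren
  omega

lemma ren_lt_iff {n : ℕ} {E : Finset (Fin n)} {x y : Fin n} (hx : x ∉ E) (hy : y ∉ E) :
    ren E x < ren E y ↔ x < y := by
  rw [ren_eq, ren_eq]
  exact rank_lt_iff (by simp [hx])

lemma ren_inj {n : ℕ} {E : Finset (Fin n)} {x y : Fin n} (hx : x ∉ E) (hy : y ∉ E)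
    (h : ren E x = ren E y) : x = y := by
  rw [ren_eq, ren_eq] at h
  exact rank_injOn (by simp [hx]) (by simp [hy]) h

lemma ren_lt_bound {n : ℕ} {E : Finset (Fin n)} {x : Fin n} (hx : x ∉ E) :
    ren E x < n - E.card := by
  rw [ren_eq]
  have h1 := rank_lt_card (A := Finset.univ \ E) (x := x) (by simp [hx])
  rwa [Finset.card_sdiff_of_subset (Finset.subset_univ E), Finset.card_univ, Fintype.card_fin] at h1

end AuxR1


/-- `I_h` is invariant under the Reidemeister 1 and
pseudo-Reidemeister 1 moves regardless of signs: if `P'` (with `m+1` crossings)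
has a chord `{t, t+1}` with cyclically adjacent endpoints (classical of either
sign, or a prechord), and deleting it with its two endpoints (renumbering the
remaining `2m` points in cyclic order) yields `P`, then `I_h(P')` and `I_h(P)`
are equivalent `ℤ/2`-labeled chord diagrams. -/
theorem Ihmap_invariant_R1_PR1 {m : ℕ} (P' : PGD (m + 1)) (P : PGD m)
    (t : Fin (2 * (m + 1)))
    (he : ({t, csucc t} : Finset (Fin (2 * (m + 1)))) ∈ P'.chords)
    (hred : Reduces P' {({t, csucc t} : Finset (Fin (2 * (m + 1))))} P) :
    LCDEquiv P'.Ihmap P.Ihmap := by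
  classical
  set E := ({t, csucc t} : Finset (Fin (2 * (m + 1)))) with hEdef
  obtain ⟨hsub, hfwd, hbwd⟩ := hred
  simp only [Finset.sup_singleton, id_eq, Finset.mem_singleton] at hfwd hbwd
  have hn : 2 ≤ 2 * (m + 1) := by omega
  have hts : t ≠ csucc t := AuxR1.csucc_ne hn t
  have htE : t ∈ E := by simp [hEdef]
  have hsE : csucc t ∈ E := by simp [hEdef]
  have hEcard : E.card = 2 := by
    rw [hEdef, Finset.card_insert_of_notMem (by simp [hts]), Finset.card_singleton]
  -- elements of chords other than E avoid E
  have hdisE : ∀ c ∈ P'.chords, c ≠ E → ∀ x ∈ c, x ≠ t ∧ x ≠ csucc t := by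
    intro c hc hne x hx
    constructor
    · rintro rfl
      exact hne (AuxR1.chord_eq_of_mem P' hc he hx htE)
    · rintro rfl
      exact hne (AuxR1.chord_eq_of_mem P' hc he hx hsE)
  have hnotE : ∀ c ∈ P'.chords, c ≠ E → ∀ x ∈ c, x ∉ E := by
    intro c hc hne x hx
    have h := hdisE c hc hne x hx
    simp [hEdef, h.1, h.2]
  have himg_val_inj : ∀ {d₁ d₂ : Finset (Fin (2 * m))},
      d₁.image Fin.val = d₂.image Fin.val → d₁ = d₂ := by
    intro d₁ d₂ h
    exact Finset.image_injective Fin.val_injective h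
  have hrenimg_inj : ∀ d₁ ∈ P'.chords, d₁ ≠ E → ∀ d₂ ∈ P'.chords, d₂ ≠ E →
      d₁.image (ren E) = d₂.image (ren E) → d₁ = d₂ := by
    intro d₁ h₁ h₁E d₂ h₂ h₂E h
    apply Finset.Subset.antisymm
    · intro z hz
      have : ren E z ∈ d₂.image (ren E) := h ▸ Finset.mem_image_of_mem _ hz
      obtain ⟨w, hw, hwz⟩ := Finset.mem_image.mp this
      rwa [AuxR1.ren_inj (hnotE d₂ h₂ h₂E w hw) (hnotE d₁ h₁ h₁E z hz) hwz] at hw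
    · intro z hz
      have : ren E z ∈ d₁.image (ren E) := h ▸ Finset.mem_image_of_mem _ hz
      obtain ⟨w, hw, hwz⟩ := Finset.mem_image.mp this
      rwa [AuxR1.ren_inj (hnotE d₁ h₁ h₁E w hw) (hnotE d₂ h₂ h₂E z hz) hwz] at hw
  -- transfer of interlacement
  have hint : ∀ c ∈ P'.chords, c ≠ E → ∀ d ∈ P'.chords, d ≠ E →
      ∀ c' d' : Finset (Fin (2 * m)), c.image (ren E) = c'.image Fin.val →
      d.image (ren E) = d'.image Fin.val → (Interlaced c d ↔ Interlaced c' d') := by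
    intro c hc hcE d hd hdE c' d' himgc himgd
    have h1 : Interlaced c d ↔ AuxR1.InterlacedN (c.image (ren E)) (d.image (ren E)) := by
      apply AuxR1.interlaced_iff_interlacedN
      intro x hx y hy
      have hxE : x ∉ E := by
        rcases Finset.mem_union.mp hx with h | h
        · exact hnotE c hc hcE x h
        · exact hnotE d hd hdE x h
      have hyE : y ∉ E := by
        rcases Finset.mem_union.mp hy with h | h
        · exact hnotE c hc hcE y h
        · exact hnotE d hd hdE y h
      exact (AuxR1.ren_lt_iff hxE hyE).symm
    have h2 : Interlaced c' d' ↔ AuxR1.InterlacedN (c'.image Fin.val) (d'.image Fin.val) := by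
      apply AuxR1.interlaced_iff_interlacedN
      intro x _ y _
      exact Fin.lt_def
    rw [h1, himgc, himgd, h2]
  -- transfer of pLabel
  have hpLabel : ∀ c ∈ P'.chords, c ≠ E → ∀ c' ∈ P.chords,
      c.image (ren E) = c'.image Fin.val → P'.pLabel c = P.pLabel c' := by
    intro c hc hcE c' hc' himg
    have hnotIntE : ¬ Interlaced c E := by
      rw [hEdef]
      exact AuxR1.not_interlaced_E_left hn t (hdisE c hc hcE)
    have hcards : (P'.classicalChords.filter (fun d => Interlaced c d)).card
        = (P.classicalChords.filter (fun d => Interlaced c' d)).card := by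
      have himgs : ((P'.classicalChords.filter (fun d => Interlaced c d)).image
            (fun d => d.image (ren E)))
          = ((P.classicalChords.filter (fun d => Interlaced c' d)).image
            (fun d => d.image Fin.val)) := by
        ext e₀
        simp only [Finset.mem_image, Finset.mem_filter, PGD.classicalChords,
          Finset.mem_sdiff]
        constructor
        · rintro ⟨d, ⟨⟨hdch, hdnp⟩, hdint⟩, rfl⟩
          have hdE : d ≠ E := by
            rintro rfl
            rw [hEdef] at hdint
            exact AuxR1.not_interlaced_E_left hn t (hdisE c hc hcE) hdint
          obtain ⟨d', hd', himgd, hpre, _⟩ := hfwd d hdch hdE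
          refine ⟨d', ⟨⟨hd', fun h => hdnp (hpre.mpr h)⟩,
            (hint c hc hcE d hdch hdE c' d' himg himgd).mp hdint⟩, himgd.symm⟩
        · rintro ⟨d', ⟨⟨hd'ch, hd'np⟩, hd'int⟩, rfl⟩
          obtain ⟨d, hdch, hdE, himgd⟩ := hbwd d' hd'ch
          obtain ⟨d'', hd''ch, himgd'', hpre, _⟩ := hfwd d hdch hdE
          have hdd : d'' = d' := himg_val_inj (himgd''.symm.trans himgd)
          subst hdd
          refine ⟨d, ⟨⟨hdch, fun h => hd'np (hpre.mp h)⟩,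
            (hint c hc hcE d hdch hdE c' d'' himg himgd).mpr hd'int⟩, himgd⟩
      have hinj1 : ((P'.classicalChords.filter (fun d => Interlaced c d)).image
          (fun d => d.image (ren E))).card
          = (P'.classicalChords.filter (fun d => Interlaced c d)).card := by
        apply Finset.card_image_of_injOn
        intro d₁ h₁ d₂ h₂ h
        simp only [Finset.mem_coe, Finset.mem_filter, PGD.classicalChords,
          Finset.mem_sdiff] at h₁ h₂
        have h₁E : d₁ ≠ E := by
          rintro rfl
          rw [hEdef] at h₁
          exact AuxR1.not_interlaced_E_left hn t (hdisE c hc hcE) h₁.2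
        have h₂E : d₂ ≠ E := by
          rintro rfl
          rw [hEdef] at h₂
          exact AuxR1.not_interlaced_E_left hn t (hdisE c hc hcE) h₂.2
        exact hrenimg_inj d₁ h₁.1.1 h₁E d₂ h₂.1.1 h₂E h
      have hinj2 : ((P.classicalChords.filter (fun d => Interlaced c' d)).image
          (fun d => d.image Fin.val)).card
          = (P.classicalChords.filter (fun d => Interlaced c' d)).card := by
        apply Finset.card_image_of_injOn
        intro d₁ _ d₂ _ h
        exact himg_val_inj h
      rw [← hinj1, himgs, hinj2]
    show ((P'.classicalChords.filter (fun d => Interlaced c d)).card : ZMod 2) = _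
    rw [hcards]
    rfl
  -- prechord correspondences
  have hprefwd : ∀ c ∈ P'.pre, c ≠ E → ∃ c' ∈ P.pre,
      c.image (ren E) = c'.image Fin.val := by
    intro c hc hcE
    obtain ⟨c', hc', himg, hpre, _⟩ := hfwd c (P'.pre_sub hc) hcE
    exact ⟨c', hpre.mp hc, himg⟩
  have hprebwd : ∀ c' ∈ P.pre, ∃ c ∈ P'.pre, c ≠ E ∧
      c.image (ren E) = c'.image Fin.val := by
    intro c' hc'
    obtain ⟨c, hc, hcE, himg⟩ := hbwd c' (P.pre_sub hc')
    obtain ⟨c'', hc''ch, himg'', hpre, _⟩ := hfwd c hc hcE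
    have hdd : c'' = c' := himg_val_inj (himg''.symm.trans himg)
    subst hdd
    exact ⟨c, hpre.mpr hc', hcE, himg⟩
  have hpe_fwd : ∀ y ∈ P'.preEndpoints, y ∉ E → ∃ y' ∈ P.preEndpoints,
      ren E y = y'.val := by
    intro y hy hyE
    obtain ⟨c, hc, hyc⟩ := (AuxR1.mem_preEndpoints P').mp hy
    have hcE : c ≠ E := fun h => hyE (h ▸ hyc)
    obtain ⟨c', hc', himg⟩ := hprefwd c hc hcE
    have hmem : ren E y ∈ c'.image Fin.val := himg ▸ Finset.mem_image_of_mem _ hyc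
    obtain ⟨y', hy'c, hval⟩ := Finset.mem_image.mp hmem
    exact ⟨y', AuxR1.pre_subset_preEndpoints P hc' hy'c, hval.symm⟩
  have hpe_bwd : ∀ y' ∈ P.preEndpoints, ∃ y ∈ P'.preEndpoints, y ∉ E ∧
      ren E y = y'.val := by
    intro y' hy'
    obtain ⟨c', hc', hy'c⟩ := (AuxR1.mem_preEndpoints P).mp hy'
    obtain ⟨c, hc, hcE, himg⟩ := hprebwd c' hc'
    have hmem : y'.val ∈ c.image (ren E) := by
      rw [himg]; exact Finset.mem_image_of_mem _ hy'c
    obtain ⟨y, hyc, hval⟩ := Finset.mem_image.mp hmem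
    exact ⟨y, AuxR1.pre_subset_preEndpoints P' hc hyc,
      hnotE c (P'.pre_sub hc) hcE y hyc, hval⟩
  -- cardinality of preEndpoints
  have hfilterNE : (P'.preEndpoints.filter (fun z => ¬ z ∈ E)).card
      = P.preEndpoints.card := by
    have himgs : ((P'.preEndpoints.filter (fun z => ¬ z ∈ E)).image (ren E))
        = P.preEndpoints.image Fin.val := by
      ext j
      simp only [Finset.mem_image, Finset.mem_filter]
      constructor
      · rintro ⟨y, ⟨hy, hyE⟩, rfl⟩
        obtain ⟨y', hy', hval⟩ := hpe_fwd y hy hyE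
        exact ⟨y', hy', hval.symm⟩
      · rintro ⟨y', hy', rfl⟩
        obtain ⟨y, hy, hyE, hval⟩ := hpe_bwd y' hy'
        exact ⟨y, ⟨hy, hyE⟩, hval⟩
    have h1 : ((P'.preEndpoints.filter (fun z => ¬ z ∈ E)).image (ren E)).card
        = (P'.preEndpoints.filter (fun z => ¬ z ∈ E)).card := by
      apply Finset.card_image_of_injOn
      intro y₁ h₁ y₂ h₂ h
      simp only [Finset.mem_coe, Finset.mem_filter] at h₁ h₂
      exact AuxR1.ren_inj h₁.2 h₂.2 h
    have h2 : (P.preEndpoints.image Fin.val).card = P.preEndpoints.card :=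
      Finset.card_image_of_injOn (fun y₁ _ y₂ _ h => Fin.val_injective h)
    rw [← h1, himgs, h2]
  have hpecard : P'.preEndpoints.card
      = (E ∩ P'.preEndpoints).card + P.preEndpoints.card := by
    have hsplit := Finset.card_filter_add_card_filter_not
      (s := P'.preEndpoints) (p := (· ∈ E))
    have he1 : P'.preEndpoints.filter (· ∈ E) = E ∩ P'.preEndpoints := by
      ext z
      simp only [Finset.mem_filter, Finset.mem_inter]
      tauto
    rw [he1, hfilterNE] at hsplit
    omega
  -- idx relation
  have hidx : ∀ x ∈ P'.preEndpoints, x ∉ E → ∀ x' ∈ P.preEndpoints,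
      ren E x = x'.val →
      P'.idx x = ((E ∩ P'.preEndpoints).filter (· < x)).card + P.idx x' := by
    intro x hx hxE x' hx' hren
    have hsplit := Finset.card_filter_add_card_filter_not
      (s := P'.preEndpoints.filter (· < x)) (p := (· ∈ E))
    have he1 : (P'.preEndpoints.filter (· < x)).filter (· ∈ E)
        = (E ∩ P'.preEndpoints).filter (· < x) := by
      ext z
      simp only [Finset.mem_filter, Finset.mem_inter]
      tauto
    have he2 : ((P'.preEndpoints.filter (· < x)).filter (fun z => ¬ z ∈ E)).card
        = P.idx x' := by
      have himgs : (((P'.preEndpoints.filter (· < x)).filter (fun z => ¬ z ∈ E)).image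
          (ren E)) = (P.preEndpoints.filter (· < x')).image Fin.val := by
        ext j
        simp only [Finset.mem_image, Finset.mem_filter]
        constructor
        · rintro ⟨y, ⟨⟨hy, hyx⟩, hyE⟩, rfl⟩
          obtain ⟨y', hy', hval⟩ := hpe_fwd y hy hyE
          refine ⟨y', ⟨hy', ?_⟩, hval.symm⟩
          have hlt : ren E y < ren E x := (AuxR1.ren_lt_iff hyE hxE).mpr hyx
          rw [hval, hren] at hlt
          exact hlt
        · rintro ⟨y', ⟨hy', hy'x⟩, rfl⟩
          obtain ⟨y, hy, hyE, hval⟩ := hpe_bwd y' hy'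
          refine ⟨y, ⟨⟨hy, ?_⟩, hyE⟩, hval⟩
          have hlt : ren E y < ren E x := by
            rw [hval, hren]
            exact hy'x
          exact (AuxR1.ren_lt_iff hyE hxE).mp hlt
      have h1 : (((P'.preEndpoints.filter (· < x)).filter (fun z => ¬ z ∈ E)).image
          (ren E)).card
          = ((P'.preEndpoints.filter (· < x)).filter (fun z => ¬ z ∈ E)).card := by
        apply Finset.card_image_of_injOn
        intro y₁ h₁ y₂ h₂ h
        simp only [Finset.mem_coe, Finset.mem_filter] at h₁ h₂
        exact AuxR1.ren_inj h₁.2 h₂.2 h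
      have h2 : ((P.preEndpoints.filter (· < x')).image Fin.val).card
          = (P.preEndpoints.filter (· < x')).card :=
        Finset.card_image_of_injOn (fun y₁ _ y₂ _ h => Fin.val_injective h)
      rw [← h1, himgs, h2]
      rfl
    rw [he1, he2] at hsplit
    show (P'.preEndpoints.filter (· < x)).card = _
    omega
  by_cases hE : E ∈ P'.pre
  · -- pre case : Reidemeister 1 insertion of a prechord
    have htpe : t ∈ P'.preEndpoints := AuxR1.pre_subset_preEndpoints P' hE htE
    have hspe : csucc t ∈ P'.preEndpoints := AuxR1.pre_subset_preEndpoints P' hE hsE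
    have hEsub : E ⊆ P'.preEndpoints := by
      intro x hx
      rw [hEdef] at hx
      simp only [Finset.mem_insert, Finset.mem_singleton] at hx
      rcases hx with rfl | rfl
      exacts [htpe, hspe]
    have hEinter : E ∩ P'.preEndpoints = E := Finset.inter_eq_left.mpr hEsub
    have hN2 : P'.preEndpoints.card = P.preEndpoints.card + 2 := by
      rw [hpecard, hEinter, hEcard]
      omega
    simp only [hEinter] at hidx
    have hkN2 : P'.idx t < P.preEndpoints.card + 2 := by
      rw [← hN2]; exact AuxR1.idx_lt_card P' htpe
    -- the main index computation
    have hwrap : t.val + 1 < 2 * (m + 1) ∨ t.val + 1 = 2 * (m + 1) := by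
      have := t.isLt; omega
    -- cnt in terms of ifs
    have hcnt : ∀ x : Fin (2 * (m + 1)), (E.filter (· < x)).card
        = (if t < x then 1 else 0) + (if csucc t < x then 1 else 0) := by
      intro x
      rw [hEdef]
      exact AuxR1.filter_pair_card _ hts
    have hF5 : ∀ x ∈ P'.preEndpoints, x ∉ E → ∀ x' ∈ P.preEndpoints,
        ren E x = x'.val →
        (P'.idx x + (2 * P.preEndpoints.card + 2 - P'.idx t)) % (P.preEndpoints.card + 2)
          = (P.idx x' + (P.preEndpoints.card - P'.idx t)) % P.preEndpoints.card := by
      intro x hx hxE x' hx' hren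
      have hj := hidx x hx hxE x' hx' hren
      rw [hcnt x] at hj
      have hiN : P.idx x' < P.preEndpoints.card := AuxR1.idx_lt_card P hx'
      have hxts : x ≠ t ∧ x ≠ csucc t := by
        rw [hEdef] at hxE
        simp only [Finset.mem_insert, Finset.mem_singleton] at hxE
        tauto
      have hxtv : x.val ≠ t.val := fun h => hxts.1 (Fin.ext h)
      have hxsv : x.val ≠ (csucc t).val := fun h => hxts.2 (Fin.ext h)
      rcases hwrap with hw | hw
      · -- non-wrap case
        have hsv : (csucc t).val = t.val + 1 := Nat.mod_eq_of_lt hw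
        have hks : P'.idx (csucc t) = P'.idx t + 1 := by
          have hfe : P'.preEndpoints.filter (· < csucc t)
              = insert t (P'.preEndpoints.filter (· < t)) := by
            ext y
            simp only [Finset.mem_insert, Finset.mem_filter, Fin.lt_def, hsv]
            constructor
            · rintro ⟨hy, hyv⟩
              by_cases hyt : y = t
              · exact Or.inl hyt
              · have : y.val ≠ t.val := fun hh => hyt (Fin.ext hh)
                exact Or.inr ⟨hy, by omega⟩
            · rintro (rfl | ⟨hy, hyv⟩)
              · exact ⟨htpe, by omega⟩
              · exact ⟨hy, by omega⟩
          show (P'.preEndpoints.filter (· < csucc t)).card = _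
          rw [hfe, Finset.card_insert_of_notMem
            (show t ∉ P'.preEndpoints.filter (· < t) from
              fun h => absurd (Finset.mem_filter.mp h).2 (lt_irrefl t))]
          rfl
        have hkssub : P'.idx (csucc t) < P.preEndpoints.card + 2 := by
          rw [← hN2]; exact AuxR1.idx_lt_card P' hspe
        have hkN : P'.idx t + 1 ≤ P.preEndpoints.card + 1 := by omega
        have hiff : t < x ↔ csucc t < x := by
          rw [Fin.lt_def, Fin.lt_def, hsv]
          omega
        by_cases htx : t < x
        · -- x above the pair
          rw [if_pos htx, if_pos (hiff.mp htx)] at hj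
          have hjk : P'.idx (csucc t) < P'.idx x :=
            (AuxR1.idx_lt_iff P' hspe).mpr (hiff.mp htx)
          rw [show P'.idx x + (2 * P.preEndpoints.card + 2 - P'.idx t)
              = (P.idx x' - P'.idx t) + 2 * (P.preEndpoints.card + 2) by omega]
          rw [Nat.add_mul_mod_self_right]
          rw [show P.idx x' + (P.preEndpoints.card - P'.idx t)
              = (P.idx x' - P'.idx t) + P.preEndpoints.card by omega]
          rw [Nat.add_mod_right]
          rw [Nat.mod_eq_of_lt (by omega), Nat.mod_eq_of_lt (by omega)]
        · -- x below the pair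
          rw [if_neg htx, if_neg (fun h => htx (hiff.mpr h))] at hj
          have hxlt : x < t := lt_of_le_of_ne (le_of_not_gt htx) hxts.1
          have hjk : P'.idx x < P'.idx t := (AuxR1.idx_lt_iff P' hx).mpr hxlt
          rw [show P'.idx x + (2 * P.preEndpoints.card + 2 - P'.idx t)
              = (P.idx x' + (P.preEndpoints.card - P'.idx t)) + (P.preEndpoints.card + 2)
              by omega]
          rw [Nat.add_mod_right]
          rw [Nat.mod_eq_of_lt (by omega), Nat.mod_eq_of_lt (by omega)]
      · -- wrap case
        have hsv : (csucc t).val = 0 := by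
          show (t.val + 1) % (2 * (m + 1)) = 0
          rw [hw, Nat.mod_self]
        have hkt : P'.idx t = P.preEndpoints.card + 1 := by
          have hfe : P'.preEndpoints.filter (· < t) = P'.preEndpoints.erase t := by
            ext y
            simp only [Finset.mem_filter, Finset.mem_erase, Fin.lt_def]
            constructor
            · rintro ⟨hy, hyv⟩
              exact ⟨fun hh => by simp [hh] at hyv, hy⟩
            · rintro ⟨hyt, hy⟩
              have h1 : y.val ≠ t.val := fun hh => hyt (Fin.ext hh)
              have h2 : y.val < 2 * (m + 1) := y.isLt
              exact ⟨hy, by omega⟩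
          show (P'.preEndpoints.filter (· < t)).card = _
          rw [hfe, Finset.card_erase_of_mem htpe, hN2]
          omega
        have hnotx : ¬ t < x := by
          rw [Fin.lt_def]
          have := x.isLt
          omega
        have hsx : csucc t < x := by
          rw [Fin.lt_def, hsv]
          omega
        rw [if_neg hnotx, if_pos hsx] at hj
        rw [show P'.idx x + (2 * P.preEndpoints.card + 2 - P'.idx t)
            = P.idx x' + (P.preEndpoints.card + 2) by omega]
        rw [Nat.add_mod_right]
        rw [show P.idx x' + (P.preEndpoints.card - P'.idx t) = P.idx x' by omega]
        rw [Nat.mod_eq_of_lt (by omega), Nat.mod_eq_of_lt (by omega)]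
    -- the image of the chord E
    have hEshift : (({P'.idx t, P'.idx (csucc t)} : Finset ℕ)).image
        (fun x => (x + (2 * P.preEndpoints.card + 2 - P'.idx t)) % (P.preEndpoints.card + 2))
        = {P.preEndpoints.card, P.preEndpoints.card + 1} := by
      rcases hwrap with hw | hw
      · have hsv : (csucc t).val = t.val + 1 := Nat.mod_eq_of_lt hw
        have hks : P'.idx (csucc t) = P'.idx t + 1 := by
          have hfe : P'.preEndpoints.filter (· < csucc t)
              = insert t (P'.preEndpoints.filter (· < t)) := by
            ext y
            simp only [Finset.mem_insert, Finset.mem_filter, Fin.lt_def, hsv]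
            constructor
            · rintro ⟨hy, hyv⟩
              by_cases hyt : y = t
              · exact Or.inl hyt
              · have : y.val ≠ t.val := fun hh => hyt (Fin.ext hh)
                exact Or.inr ⟨hy, by omega⟩
            · rintro (rfl | ⟨hy, hyv⟩)
              · exact ⟨htpe, by omega⟩
              · exact ⟨hy, by omega⟩
          show (P'.preEndpoints.filter (· < csucc t)).card = _
          rw [hfe, Finset.card_insert_of_notMem
            (show t ∉ P'.preEndpoints.filter (· < t) from
              fun h => absurd (Finset.mem_filter.mp h).2 (lt_irrefl t))]
          rfl
        have hkssub : P'.idx (csucc t) < P.preEndpoints.card + 2 := by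
          rw [← hN2]; exact AuxR1.idx_lt_card P' hspe
        have h1 : (P'.idx t + (2 * P.preEndpoints.card + 2 - P'.idx t))
            % (P.preEndpoints.card + 2) = P.preEndpoints.card := by
          rw [show P'.idx t + (2 * P.preEndpoints.card + 2 - P'.idx t)
              = P.preEndpoints.card + (P.preEndpoints.card + 2) by omega]
          rw [Nat.add_mod_right, Nat.mod_eq_of_lt (by omega)]
        have h2 : (P'.idx (csucc t) + (2 * P.preEndpoints.card + 2 - P'.idx t))
            % (P.preEndpoints.card + 2) = P.preEndpoints.card + 1 := by
          rw [hks]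
          rw [show P'.idx t + 1 + (2 * P.preEndpoints.card + 2 - P'.idx t)
              = (P.preEndpoints.card + 1) + (P.preEndpoints.card + 2) by omega]
          rw [Nat.add_mod_right, Nat.mod_eq_of_lt (by omega)]
        simp only [Finset.image_insert, Finset.image_singleton]
        rw [h1, h2]
      · have hsv : (csucc t).val = 0 := by
          show (t.val + 1) % (2 * (m + 1)) = 0
          rw [hw, Nat.mod_self]
        have hkt : P'.idx t = P.preEndpoints.card + 1 := by
          have hfe : P'.preEndpoints.filter (· < t) = P'.preEndpoints.erase t := by
            ext y
            simp only [Finset.mem_filter, Finset.mem_erase, Fin.lt_def]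
            constructor
            · rintro ⟨hy, hyv⟩
              exact ⟨fun hh => by simp [hh] at hyv, hy⟩
            · rintro ⟨hyt, hy⟩
              have h1 : y.val ≠ t.val := fun hh => hyt (Fin.ext hh)
              have h2 : y.val < 2 * (m + 1) := y.isLt
              exact ⟨hy, by omega⟩
          show (P'.preEndpoints.filter (· < t)).card = _
          rw [hfe, Finset.card_erase_of_mem htpe, hN2]
          omega
        have hs0 : P'.idx (csucc t) = 0 := by
          show (P'.preEndpoints.filter (· < csucc t)).card = 0
          rw [Finset.filter_eq_empty_iff.mpr ?_, Finset.card_empty]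
          intro y _
          rw [Fin.lt_def, hsv]
          omega
        have h1 : (P'.idx t + (2 * P.preEndpoints.card + 2 - P'.idx t))
            % (P.preEndpoints.card + 2) = P.preEndpoints.card := by
          rw [show P'.idx t + (2 * P.preEndpoints.card + 2 - P'.idx t)
              = P.preEndpoints.card + (P.preEndpoints.card + 2) by omega]
          rw [Nat.add_mod_right, Nat.mod_eq_of_lt (by omega)]
        have h2 : (P'.idx (csucc t) + (2 * P.preEndpoints.card + 2 - P'.idx t))
            % (P.preEndpoints.card + 2) = P.preEndpoints.card + 1 := by
          rw [hs0, hkt]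
          rw [show 0 + (2 * P.preEndpoints.card + 2 - (P.preEndpoints.card + 1))
              = P.preEndpoints.card + 1 by omega]
          rw [Nat.mod_eq_of_lt (by omega)]
        simp only [Finset.image_insert, Finset.image_singleton]
        rw [h1, h2]
    -- chord image transfer
    have hchordimg2 : ∀ c ∈ P'.pre, c ≠ E → ∀ c' ∈ P.pre,
        c.image (ren E) = c'.image Fin.val →
        (c.image P'.idx).image
          (fun x => (x + (2 * P.preEndpoints.card + 2 - P'.idx t))
            % (P.preEndpoints.card + 2))
        = (c'.image P.idx).image
          (fun x => (x + (P.preEndpoints.card - P'.idx t)) % P.preEndpoints.card) := by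
      intro c hc hcE c' hc' himg
      rw [Finset.image_image, Finset.image_image]
      ext j
      simp only [Finset.mem_image, Function.comp_apply]
      constructor
      · rintro ⟨x, hxc, rfl⟩
        have hxE : x ∉ E := hnotE c (P'.pre_sub hc) hcE x hxc
        have hmem : ren E x ∈ c'.image Fin.val := himg ▸ Finset.mem_image_of_mem _ hxc
        obtain ⟨x', hx'c, hval⟩ := Finset.mem_image.mp hmem
        refine ⟨x', hx'c, ?_⟩
        exact (hF5 x (AuxR1.pre_subset_preEndpoints P' hc hxc) hxE x'
          (AuxR1.pre_subset_preEndpoints P hc' hx'c) hval.symm).symm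
      · rintro ⟨x', hx'c, rfl⟩
        have hmem : x'.val ∈ c.image (ren E) := by
          rw [himg]; exact Finset.mem_image_of_mem _ hx'c
        obtain ⟨x, hxc, hval⟩ := Finset.mem_image.mp hmem
        refine ⟨x, hxc, ?_⟩
        exact hF5 x (AuxR1.pre_subset_preEndpoints P' hc hxc)
          (hnotE c (P'.pre_sub hc) hcE x hxc) x'
          (AuxR1.pre_subset_preEndpoints P hc' hx'c) hval
    -- set up the rotated diagrams
    have hWF1 := AuxR1.Ihmap_WF P'
    have hWF2 := AuxR1.Ihmap_WF P
    have hD1WF : (AuxR1.rotate P'.Ihmap (2 * P.preEndpoints.card + 2 - P'.idx t)).WF :=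
      AuxR1.rotate_WF hWF1 _
    have hD2WF : (AuxR1.rotate P.Ihmap (P.preEndpoints.card - P'.idx t)).WF :=
      AuxR1.rotate_WF hWF2 _
    have hbr1 : ∀ (c₂ : Finset ℕ),
        c₂.image (fun x => (x + (2 * P.preEndpoints.card + 2 - P'.idx t)) % P'.Ihmap.points)
        = c₂.image (fun x => (x + (2 * P.preEndpoints.card + 2 - P'.idx t))
            % (P.preEndpoints.card + 2)) := by
      intro c₂
      apply Finset.image_congr
      intro x _
      rw [show P'.Ihmap.points = P.preEndpoints.card + 2 from hN2]
    -- membership descriptions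
    have hmemD1 : ∀ c₀ : Finset ℕ,
        c₀ ∈ (AuxR1.rotate P'.Ihmap (2 * P.preEndpoints.card + 2 - P'.idx t)).chords ↔
        ∃ c ∈ P'.pre, (c.image P'.idx).image
          (fun x => (x + (2 * P.preEndpoints.card + 2 - P'.idx t))
            % (P.preEndpoints.card + 2)) = c₀ := by
      intro c₀
      show c₀ ∈ (P'.pre.image (fun c => c.image P'.idx)).image _ ↔ _
      constructor
      · intro h
        obtain ⟨c₁, hc₁, rfl⟩ := Finset.mem_image.mp h
        obtain ⟨c, hc, rfl⟩ := Finset.mem_image.mp hc₁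
        exact ⟨c, hc, (hbr1 (c.image P'.idx)).symm⟩
      · rintro ⟨c, hc, rfl⟩
        rw [← hbr1 (c.image P'.idx)]
        exact Finset.mem_image_of_mem _ (Finset.mem_image_of_mem _ hc)
    have hmemD2 : ∀ c₀ : Finset ℕ,
        c₀ ∈ (AuxR1.rotate P.Ihmap (P.preEndpoints.card - P'.idx t)).chords ↔
        ∃ c' ∈ P.pre, (c'.image P.idx).image
          (fun x => (x + (P.preEndpoints.card - P'.idx t)) % P.preEndpoints.card) = c₀ := by
      intro c₀
      show c₀ ∈ (P.pre.image (fun c => c.image P.idx)).image _ ↔ _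
      constructor
      · intro h
        obtain ⟨c₁, hc₁, rfl⟩ := Finset.mem_image.mp h
        obtain ⟨c, hc, rfl⟩ := Finset.mem_image.mp hc₁
        exact ⟨c, hc, rfl⟩
      · rintro ⟨c, hc, rfl⟩
        exact Finset.mem_image_of_mem _ (Finset.mem_image_of_mem _ hc)
    have hEimg : ((E.image P'.idx).image
        (fun x => (x + (2 * P.preEndpoints.card + 2 - P'.idx t))
          % (P.preEndpoints.card + 2)))
        = {P.preEndpoints.card, P.preEndpoints.card + 1} := by
      rw [hEdef, Finset.image_insert, Finset.image_singleton]
      exact hEshift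
    -- the chords of the rotated diagrams
    have hchords_main :
        (AuxR1.rotate P'.Ihmap (2 * P.preEndpoints.card + 2 - P'.idx t)).chords
        = insert ({P.preEndpoints.card, P.preEndpoints.card + 1} : Finset ℕ)
          (AuxR1.rotate P.Ihmap (P.preEndpoints.card - P'.idx t)).chords := by
      ext c₀
      rw [hmemD1 c₀]
      simp only [Finset.mem_insert]
      rw [hmemD2 c₀]
      constructor
      · rintro ⟨c, hc, rfl⟩
        by_cases hcE : c = E
        · subst hcE
          exact Or.inl hEimg
        · obtain ⟨c', hc', himg⟩ := hprefwd c hc hcE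
          exact Or.inr ⟨c', hc', (hchordimg2 c hc hcE c' hc' himg).symm⟩
      · rintro (rfl | ⟨c', hc', rfl⟩)
        · exact ⟨E, hE, hEimg⟩
        · obtain ⟨c, hc, hcE, himg⟩ := hprebwd c' hc'
          exact ⟨c, hc, hchordimg2 c hc hcE c' hc' himg⟩
    -- label computations
    have hD1lab : ∀ c ∈ P'.pre,
        (AuxR1.rotate P'.Ihmap (2 * P.preEndpoints.card + 2 - P'.idx t)).label
          ((c.image P'.idx).image
            (fun x => (x + (2 * P.preEndpoints.card + 2 - P'.idx t))
              % (P.preEndpoints.card + 2)))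
        = P'.pLabel c := by
      intro c hc
      have h0 := AuxR1.rotate_label hWF1 (2 * P.preEndpoints.card + 2 - P'.idx t)
        (c.image P'.idx) (Finset.mem_image_of_mem _ hc)
      rw [AuxR1.Ihmap_label P' hc] at h0
      rw [← hbr1 (c.image P'.idx)]
      exact h0
    have hD2lab : ∀ c' ∈ P.pre,
        (AuxR1.rotate P.Ihmap (P.preEndpoints.card - P'.idx t)).label
          ((c'.image P.idx).image
            (fun x => (x + (P.preEndpoints.card - P'.idx t)) % P.preEndpoints.card))
        = P.pLabel c' := by
      intro c' hc'
      have h0 := AuxR1.rotate_label hWF2 (P.preEndpoints.card - P'.idx t)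
        (c'.image P.idx) (Finset.mem_image_of_mem _ hc')
      rw [AuxR1.Ihmap_label P hc'] at h0
      exact h0
    have hpE0 : P'.pLabel E = 0 := by
      have hfilt : P'.classicalChords.filter (fun d => Interlaced E d) = ∅ := by
        apply Finset.filter_eq_empty_iff.mpr
        intro d hd
        have hdch : d ∈ P'.chords := (Finset.mem_sdiff.mp hd).1
        have hdE : d ≠ E := fun h => (Finset.mem_sdiff.mp hd).2 (h ▸ hE)
        rw [hEdef]
        exact AuxR1.not_interlaced_E_right hn t (P'.two_mem d hdch) (hdisE d hdch hdE)
      show ((P'.classicalChords.filter (fun d => Interlaced E d)).card : ZMod 2) = 0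
      rw [hfilt]
      simp
    have hlab4 : (AuxR1.rotate P'.Ihmap (2 * P.preEndpoints.card + 2 - P'.idx t)).label
        ({P.preEndpoints.card, P.preEndpoints.card + 1} : Finset ℕ) = 0 := by
      rw [← hEimg, hD1lab E hE]
      exact hpE0
    have hlab5 : ∀ c₀ ∈ (AuxR1.rotate P.Ihmap (P.preEndpoints.card - P'.idx t)).chords,
        (AuxR1.rotate P'.Ihmap (2 * P.preEndpoints.card + 2 - P'.idx t)).label c₀
        = (AuxR1.rotate P.Ihmap (P.preEndpoints.card - P'.idx t)).label c₀ := by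
      intro c₀ h
      obtain ⟨c', hc', rfl⟩ := (hmemD2 c₀).mp h
      obtain ⟨c, hc, hcE, himg⟩ := hprebwd c' hc'
      rw [← hchordimg2 c hc hcE c' hc' himg, hD1lab c hc, hchordimg2 c hc hcE c' hc' himg,
        hD2lab c' hc']
      exact hpLabel c (P'.pre_sub hc) hcE c' (P.pre_sub hc') himg
    -- the insertion move
    have hins : InsMove (AuxR1.rotate P.Ihmap (P.preEndpoints.card - P'.idx t))
        (AuxR1.rotate P'.Ihmap (2 * P.preEndpoints.card + 2 - P'.idx t)) := by
      refine ⟨hN2, ?_, hchords_main, hlab4, hlab5⟩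
      intro h
      have := hD2WF.1 _ h ((AuxR1.rotate P.Ihmap (P.preEndpoints.card - P'.idx t)).points)
        (by simp)
      omega
    have step1 : LCDStep P'.Ihmap
        (AuxR1.rotate P'.Ihmap (2 * P.preEndpoints.card + 2 - P'.idx t)) :=
      ⟨hWF1, hD1WF, Or.inl (AuxR1.rotate_rotMove hWF1 _)⟩
    have step2 : LCDStep (AuxR1.rotate P.Ihmap (P.preEndpoints.card - P'.idx t))
        (AuxR1.rotate P'.Ihmap (2 * P.preEndpoints.card + 2 - P'.idx t)) :=
      ⟨hD2WF, hD1WF, Or.inr (Or.inl hins)⟩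
    have step3 : LCDStep P.Ihmap
        (AuxR1.rotate P.Ihmap (P.preEndpoints.card - P'.idx t)) :=
      ⟨hWF2, hD2WF, Or.inl (AuxR1.rotate_rotMove hWF2 _)⟩
    exact Relation.EqvGen.trans _ _ _ (Relation.EqvGen.rel _ _ step1)
      (Relation.EqvGen.trans _ _ _ (Relation.EqvGen.symm _ _ (Relation.EqvGen.rel _ _ step2))
        (Relation.EqvGen.symm _ _ (Relation.EqvGen.rel _ _ step3)))
  · -- classical case : the diagrams are equal
    have hEdisj : E ∩ P'.preEndpoints = ∅ := by
      ext x
      simp only [Finset.mem_inter, Finset.notMem_empty, iff_false, not_and]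
      intro hxE hxpe
      obtain ⟨c, hc, hxc⟩ := (AuxR1.mem_preEndpoints P').mp hxpe
      have : c = E := AuxR1.chord_eq_of_mem P' (P'.pre_sub hc) he hxc hxE
      exact hE (this ▸ hc)
    have hidx' : ∀ x ∈ P'.preEndpoints, x ∉ E → ∀ x' ∈ P.preEndpoints,
        ren E x = x'.val → P'.idx x = P.idx x' := by
      intro x hx hxE x' hx' hren
      have := hidx x hx hxE x' hx' hren
      rw [hEdisj] at this
      simpa using this
    have hchordimg : ∀ c ∈ P'.pre, c ≠ E → ∀ c' ∈ P.pre,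
        c.image (ren E) = c'.image Fin.val → c.image P'.idx = c'.image P.idx := by
      intro c hc hcE c' hc' himg
      ext j
      simp only [Finset.mem_image]
      constructor
      · rintro ⟨x, hxc, rfl⟩
        have hxE : x ∉ E := hnotE c (P'.pre_sub hc) hcE x hxc
        have hmem : ren E x ∈ c'.image Fin.val := himg ▸ Finset.mem_image_of_mem _ hxc
        obtain ⟨x', hx'c, hval⟩ := Finset.mem_image.mp hmem
        refine ⟨x', hx'c, ?_⟩
        exact (hidx' x (AuxR1.pre_subset_preEndpoints P' hc hxc) hxE x'
          (AuxR1.pre_subset_preEndpoints P hc' hx'c) hval.symm).symm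
      · rintro ⟨x', hx'c, rfl⟩
        have hmem : x'.val ∈ c.image (ren E) := by
          rw [himg]; exact Finset.mem_image_of_mem _ hx'c
        obtain ⟨x, hxc, hval⟩ := Finset.mem_image.mp hmem
        refine ⟨x, hxc, ?_⟩
        exact hidx' x (AuxR1.pre_subset_preEndpoints P' hc hxc)
          (hnotE c (P'.pre_sub hc) hcE x hxc) x'
          (AuxR1.pre_subset_preEndpoints P hc' hx'c) hval
    have hnotE_pre : ∀ c ∈ P'.pre, c ≠ E := fun c hc h => hE (h ▸ hc)
    have hpoints : P'.preEndpoints.card = P.preEndpoints.card := by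
      rw [hpecard, hEdisj]
      simp
    have hchords : P'.Ihmap.chords = P.Ihmap.chords := by
      show P'.pre.image (fun c => c.image P'.idx) = P.pre.image (fun c => c.image P.idx)
      ext c₀
      simp only [Finset.mem_image]
      constructor
      · rintro ⟨c, hc, rfl⟩
        obtain ⟨c', hc', himg⟩ := hprefwd c hc (hnotE_pre c hc)
        exact ⟨c', hc', (hchordimg c hc (hnotE_pre c hc) c' hc' himg).symm⟩
      · rintro ⟨c', hc', rfl⟩
        obtain ⟨c, hc, hcE, himg⟩ := hprebwd c' hc'
        exact ⟨c, hc, hchordimg c hc hcE c' hc' himg⟩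
    have hlabel : P'.Ihmap.label = P.Ihmap.label := by
      funext c₀
      by_cases hex : ∃ c ∈ P'.pre, c.image P'.idx = c₀
      · obtain ⟨c, hc, hcimg⟩ := hex
        obtain ⟨c', hc', himg⟩ := hprefwd c hc (hnotE_pre c hc)
        have hcimg' : c'.image P.idx = c₀ := by
          rw [← hchordimg c hc (hnotE_pre c hc) c' hc' himg, hcimg]
        have hL : P'.Ihmap.label c₀ = P'.pLabel c := by
          rw [← hcimg]; exact AuxR1.Ihmap_label P' hc
        have hR : P.Ihmap.label c₀ = P.pLabel c' := by
          rw [← hcimg']; exact AuxR1.Ihmap_label P hc'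
        rw [hL, hR]
        exact hpLabel c (P'.pre_sub hc) (hnotE_pre c hc) c' (P.pre_sub hc') himg
      · have h1 : P'.pre.filter (fun c => c.image P'.idx = c₀) = ∅ := by
          apply Finset.filter_eq_empty_iff.mpr
          intro c hc h
          exact hex ⟨c, hc, h⟩
        have h2 : P.pre.filter (fun c => c.image P.idx = c₀) = ∅ := by
          apply Finset.filter_eq_empty_iff.mpr
          intro c' hc' h
          obtain ⟨c, hc, hcE, himg⟩ := hprebwd c' hc'
          exact hex ⟨c, hc, by rw [hchordimg c hc hcE c' hc' himg, h]⟩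
        show (∑ c ∈ P'.pre.filter (fun c => c.image P'.idx = c₀), P'.pLabel c) = _
        rw [h1]
        show (0 : ZMod 2) = (∑ c ∈ P.pre.filter (fun c => c.image P.idx = c₀), P.pLabel c)
        rw [h2]
        simp
    have heq : P'.Ihmap = P.Ihmap := by
      have h1 : P'.Ihmap.points = P.Ihmap.points := hpoints
      cases hh' : P'.Ihmap with
      | mk a b l =>
        cases hh : P.Ihmap with
        | mk a' b' l' =>
          rw [hh', hh] at h1 hchords hlabel
          simp only at h1 hchords hlabel
          rw [h1, hchords, hlabel]
    rw [heq]
    exact Relation.EqvGen.refl _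
end
end

section
/- The map I_h is invariant under the Reidemeister 2 move with arbitrary signs: suppose P′ (with m+2 crossings) contains two disjoint pairs of cyclically adjacent points a, a+1 and b, b+1 and two classical chords e₁ = {a, b+1} and e₂ = {a+1, b} carrying arbitrary (not necessarily opposite) signs, and suppose that deleting e₁, e₂ together with the four points a, a+1, b, b+1 from P′ (renumbering the remaining 2m points in cyclic order) yields P. Then I_h(P′) and I_h(P) are equivalent ℤ/2-labeled chord diagrams. -/
/-!
Formalization framework for pseudo-Gauss diagrams (Gauss diagrams of
virtual pseudoknots), the interlacement-based invariants `I` and `I_h`,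
and the Gauss-diagrammatic Reidemeister moves.
-/

noncomputable section
open scoped Classical

namespace R2Aux

open Finset

lemma pair_filter_card {α : Type*} [DecidableEq α] (s t : α) (hst : s ≠ t)
    (p : α → Prop) [DecidablePred p] :
    (({s, t} : Finset α).filter p).card
      = (if p s then 1 else 0) + (if p t then 1 else 0) := by
  rw [filter_insert, filter_singleton]
  split_ifs <;> simp_all [Finset.card_insert_of_notMem]

section ren

variable {n : ℕ} {E : Finset (Fin n)}

lemma ren_lt_ren {x y : Fin n} (hx : x ∉ E) (hxy : x < y) :
    ren E x < ren E y := by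
  classical
  have hsub : E.filter (fun z => z < y) ⊆ E.filter (fun z => z < x) ∪ Finset.Ioo x y := by
    intro z hz
    simp only [mem_filter, mem_union, Finset.mem_Ioo] at hz ⊢
    rcases lt_trichotomy z x with h | h | h
    · exact Or.inl ⟨hz.1, h⟩
    · exact absurd (h ▸ hz.1) hx
    · exact Or.inr ⟨h, hz.2⟩
  have h1 : (E.filter (fun z => z < y)).card
      ≤ (E.filter (fun z => z < x)).card + (Finset.Ioo x y).card :=
    (card_le_card hsub).trans (card_union_le _ _)
  have h2 : (Finset.Ioo x y).card = y.val - x.val - 1 := Fin.card_Ioo x y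
  have h3 : (E.filter (fun z => z < x)).card ≤ x.val := by
    have : E.filter (fun z => z < x) ⊆ Finset.Iio x := fun z hz =>
      Finset.mem_Iio.2 (mem_filter.1 hz).2
    simpa using (card_le_card this)
  have hxy' : x.val < y.val := hxy
  unfold ren
  omega

lemma ren_lt_iff {x y : Fin n} (hx : x ∉ E) (hy : y ∉ E) :
    ren E x < ren E y ↔ x < y := by
  constructor
  · intro h
    rcases lt_trichotomy x y with h' | h' | h'
    · exact h'
    · subst h'; omega
    · exact absurd (ren_lt_ren hy h') (by omega)
  · exact ren_lt_ren hx

lemma ren_inj {x y : Fin n} (hx : x ∉ E) (hy : y ∉ E) (h : ren E x = ren E y) : x = y := by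
  rcases lt_trichotomy x y with h' | h' | h'
  · exact absurd (ren_lt_ren hx h') (by omega)
  · exact h'
  · exact absurd (ren_lt_ren hy h') (by omega)

end ren

lemma cycBtw_iff_of_lt_iff {n n' : ℕ} {u x v : Fin n} {u' x' v' : Fin n'}
    (h1 : u < v ↔ u' < v') (h2 : u < x ↔ u' < x') (h3 : x < v ↔ x' < v') :
    (CycBtw u x v ↔ CycBtw u' x' v') := by
  unfold CycBtw
  split_ifs <;> tauto

lemma cycBtw_csucc {n : ℕ} {u v x : Fin n} (hu1 : u ≠ x) (hu2 : u ≠ csucc x)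
    (hv1 : v ≠ x) (hv2 : v ≠ csucc x) :
    (CycBtw u x v ↔ CycBtw u (csucc x) v) := by
  have hun : u.val < n := u.isLt
  have hvn : v.val < n := v.isLt
  have hxn : x.val < n := x.isLt
  have h1 : u.val ≠ x.val := fun h => hu1 (Fin.ext h)
  have h2 : u.val ≠ (csucc x).val := fun h => hu2 (Fin.ext h)
  have h3 : v.val ≠ x.val := fun h => hv1 (Fin.ext h)
  have h4 : v.val ≠ (csucc x).val := fun h => hv2 (Fin.ext h)
  have hcs : (csucc x).val = (x.val + 1) % n := rfl
  unfold CycBtw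
  rcases Nat.lt_or_ge (x.val + 1) n with h | h
  · rw [Nat.mod_eq_of_lt h] at hcs
    split_ifs <;> simp only [Fin.lt_def] at * <;> omega
  · have hz : (x.val + 1) % n = 0 := by
      have hxe : x.val + 1 = n := by omega
      simp [hxe]
    rw [hz] at hcs
    split_ifs <;> simp only [Fin.lt_def] at * <;> omega

lemma interlaced_pair {n : ℕ} {p q : Fin n} (hpq : p ≠ q) (d : Finset (Fin n)) :
    Interlaced {p, q} d ↔
      ((d.filter fun x => CycBtw p x q).card = 1 ∨
        (d.filter fun x => CycBtw q x p).card = 1) := by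
  constructor
  · rintro ⟨a, b, hab, habe, hcard⟩
    have ha : a ∈ ({p, q} : Finset (Fin n)) := habe ▸ (by simp)
    have hb : b ∈ ({p, q} : Finset (Fin n)) := habe ▸ (by simp)
    simp only [mem_insert, mem_singleton] at ha hb
    rcases ha with rfl | rfl
    · rcases hb with rfl | rfl
      · exact absurd rfl hab
      · exact Or.inl hcard
    · rcases hb with rfl | rfl
      · exact Or.inr hcard
      · exact absurd rfl hab
  · rintro (h | h)
    · exact ⟨p, q, hpq, rfl, h⟩
    · exact ⟨q, p, hpq.symm, by rw [Finset.pair_comm], h⟩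

lemma interlaced_transfer {n n' : ℕ} {E : Finset (Fin n)}
    {c d : Finset (Fin n)} {c' d' : Finset (Fin n')}
    (hcE : ∀ x ∈ c, x ∉ E) (hdE : ∀ x ∈ d, x ∉ E)
    (hc2 : c.card = 2) (hd2 : d.card = 2)
    (hc : c.image (ren E) = c'.image Fin.val) (hd : d.image (ren E) = d'.image Fin.val) :
    (Interlaced c d ↔ Interlaced c' d') := by
  classical
  obtain ⟨u, v, huv, rfl⟩ := Finset.card_eq_two.1 hc2
  obtain ⟨s, t, hst, rfl⟩ := Finset.card_eq_two.1 hd2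
  have humem : u ∈ ({u, v} : Finset (Fin n)) := by simp
  have hvmem : v ∈ ({u, v} : Finset (Fin n)) := by simp
  have hsmem : s ∈ ({s, t} : Finset (Fin n)) := by simp
  have htmem : t ∈ ({s, t} : Finset (Fin n)) := by simp
  have huE := hcE u humem
  have hvE := hcE v hvmem
  have hsE := hdE s hsmem
  have htE := hdE t htmem
  -- extract primed endpoints
  have hu' : ren E u ∈ c'.image Fin.val := by
    rw [← hc]; exact mem_image_of_mem _ humem
  obtain ⟨u', hu'mem, hu'val⟩ := Finset.mem_image.1 hu'
  have hv' : ren E v ∈ c'.image Fin.val := by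
    rw [← hc]; exact mem_image_of_mem _ hvmem
  obtain ⟨v', hv'mem, hv'val⟩ := Finset.mem_image.1 hv'
  have hs' : ren E s ∈ d'.image Fin.val := by
    rw [← hd]; exact mem_image_of_mem _ hsmem
  obtain ⟨s', hs'mem, hs'val⟩ := Finset.mem_image.1 hs'
  have ht' : ren E t ∈ d'.image Fin.val := by
    rw [← hd]; exact mem_image_of_mem _ htmem
  obtain ⟨t', ht'mem, ht'val⟩ := Finset.mem_image.1 ht'
  have key : ∀ (x y : Fin n) (x' y' : Fin n'), x ∉ E → y ∉ E →
      x'.val = ren E x → y'.val = ren E y → (x < y ↔ x' < y') := by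
    intro x y x' y' hx hy hx' hy'
    simp only [Fin.lt_def, hx', hy']
    exact ((ren_lt_iff hx hy).trans Fin.lt_def).symm
  have hu'v' : u' ≠ v' := by
    intro h
    apply huv
    apply ren_inj huE hvE
    rw [← hu'val, ← hv'val, h]
  have hs't' : s' ≠ t' := by
    intro h
    apply hst
    apply ren_inj hsE htE
    rw [← hs'val, ← ht'val, h]
  have hc' : c' = {u', v'} := by
    apply Finset.image_injective Fin.val_injective
    rw [← hc]
    rw [Finset.image_insert, Finset.image_singleton, Finset.image_insert,
      Finset.image_singleton, hu'val, hv'val]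
  have hd'' : d' = {s', t'} := by
    apply Finset.image_injective Fin.val_injective
    rw [← hd]
    rw [Finset.image_insert, Finset.image_singleton, Finset.image_insert,
      Finset.image_singleton, hs'val, ht'val]
  subst hc'; subst hd''
  have cb1 : CycBtw u s v ↔ CycBtw u' s' v' :=
    cycBtw_iff_of_lt_iff (key u v u' v' huE hvE hu'val hv'val)
      (key u s u' s' huE hsE hu'val hs'val) (key s v s' v' hsE hvE hs'val hv'val)
  have cb2 : CycBtw u t v ↔ CycBtw u' t' v' :=
    cycBtw_iff_of_lt_iff (key u v u' v' huE hvE hu'val hv'val)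
      (key u t u' t' huE htE hu'val ht'val) (key t v t' v' htE hvE ht'val hv'val)
  have cb3 : CycBtw v s u ↔ CycBtw v' s' u' :=
    cycBtw_iff_of_lt_iff (key v u v' u' hvE huE hv'val hu'val)
      (key v s v' s' hvE hsE hv'val hs'val) (key s u s' u' hsE huE hs'val hu'val)
  have cb4 : CycBtw v t u ↔ CycBtw v' t' u' :=
    cycBtw_iff_of_lt_iff (key v u v' u' hvE huE hv'val hu'val)
      (key v t v' t' hvE htE hv'val ht'val) (key t u t' u' htE huE ht'val hu'val)
  rw [interlaced_pair huv, interlaced_pair hu'v',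
    pair_filter_card s t hst, pair_filter_card s t hst,
    pair_filter_card s' t' hs't', pair_filter_card s' t' hs't']
  simp only [cb1, cb2, cb3, cb4]

end R2Aux

/-- `I_h` is invariant under the Reidemeister 2 move with
arbitrary signs: if `P'` (with `m+2` crossings) contains disjoint pairs of
cyclically adjacent points `a, a+1` and `b, b+1` and classical chords
`e₁ = {a, b+1}`, `e₂ = {a+1, b}` carrying arbitrary signs, and deleting `e₁, e₂`
together with the four points (renumbering the remaining `2m` points in cyclic
order) yields `P`, then `I_h(P')` and `I_h(P)` are equivalent `ℤ/2`-labeled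
chord diagrams. -/
theorem Ihmap_invariant_R2 {m : ℕ} (P' : PGD (m + 2)) (P : PGD m)
    (a b : Fin (2 * (m + 2)))
    (hdisj : Disjoint ({a, csucc a} : Finset (Fin (2 * (m + 2)))) {b, csucc b})
    (he₁ : ({a, csucc b} : Finset (Fin (2 * (m + 2)))) ∈ P'.classicalChords)
    (he₂ : ({csucc a, b} : Finset (Fin (2 * (m + 2)))) ∈ P'.classicalChords)
    (hred : Reduces P'
      {({a, csucc b} : Finset (Fin (2 * (m + 2)))), {csucc a, b}} P) :
    LCDEquiv P'.Ihmap P.Ihmap := by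
  classical
  obtain ⟨hRsub, hfwd, hbwd⟩ := hred
  set e₁ : Finset (Fin (2 * (m + 2))) := {a, csucc b} with he₁def
  set e₂ : Finset (Fin (2 * (m + 2))) := {csucc a, b} with he₂def
  set R : Finset (Finset (Fin (2 * (m + 2)))) := {e₁, e₂} with hRdef
  set E : Finset (Fin (2 * (m + 2))) := R.sup id with hEdef
  -- basic distinctness
  have hne_ab : a ≠ b := by
    intro h
    exact (Finset.disjoint_left.1 hdisj (show a ∈ ({a, csucc a} : Finset _) by simp))
      (show a ∈ ({b, csucc b} : Finset _) by simp [h])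
  have hne_acb : a ≠ csucc b := by
    intro h
    exact (Finset.disjoint_left.1 hdisj (show a ∈ ({a, csucc a} : Finset _) by simp))
      (show a ∈ ({b, csucc b} : Finset _) by simp [h])
  have hne_cab : csucc a ≠ b := by
    intro h
    exact (Finset.disjoint_left.1 hdisj (show csucc a ∈ ({a, csucc a} : Finset _) by simp))
      (show csucc a ∈ ({b, csucc b} : Finset _) by simp [h])
  have hne_cacb : csucc a ≠ csucc b := by
    intro h
    exact (Finset.disjoint_left.1 hdisj (show csucc a ∈ ({a, csucc a} : Finset _) by simp))
      (show csucc a ∈ ({b, csucc b} : Finset _) by simp [h])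
  have hcsucc_ne : ∀ x : Fin (2 * (m + 2)), x ≠ csucc x := by
    intro x h
    have h2 : x.val = (x.val + 1) % (2 * (m + 2)) := congrArg Fin.val h
    have hx := x.isLt
    rcases Nat.lt_or_ge (x.val + 1) (2 * (m + 2)) with h' | h'
    · rw [Nat.mod_eq_of_lt h'] at h2; omega
    · have he : x.val + 1 = 2 * (m + 2) := by omega
      rw [he, Nat.mod_self] at h2; omega
  have hEmem : ∀ x : Fin (2 * (m + 2)),
      x ∈ E ↔ (x = a ∨ x = csucc a ∨ x = b ∨ x = csucc b) := by
    intro x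
    simp only [hEdef, hRdef, Finset.mem_sup, Finset.mem_insert, Finset.mem_singleton, id_eq]
    constructor
    · rintro ⟨i, (rfl | rfl), hi⟩ <;> simp [he₁def, he₂def] at hi <;> tauto
    · rintro (rfl | rfl | rfl | rfl)
      · exact ⟨e₁, Or.inl rfl, by simp [he₁def]⟩
      · exact ⟨e₂, Or.inr rfl, by simp [he₂def]⟩
      · exact ⟨e₂, Or.inr rfl, by simp [he₂def]⟩
      · exact ⟨e₁, Or.inl rfl, by simp [he₁def]⟩
  have he₁' : e₁ ∈ P'.chords \ P'.pre := he₁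
  have he₂' : e₂ ∈ P'.chords \ P'.pre := he₂
  have he₁chords : e₁ ∈ P'.chords := (Finset.mem_sdiff.1 he₁').1
  have he₂chords : e₂ ∈ P'.chords := (Finset.mem_sdiff.1 he₂').1
  have he₁pre : e₁ ∉ P'.pre := (Finset.mem_sdiff.1 he₁').2
  have he₂pre : e₂ ∉ P'.pre := (Finset.mem_sdiff.1 he₂').2
  have huniq : ∀ {c d : Finset (Fin (2 * (m + 2)))} {x : Fin (2 * (m + 2))},
      c ∈ P'.chords → d ∈ P'.chords → x ∈ c → x ∈ d → c = d := by
    intro c d x hc hd hxc hxd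
    obtain ⟨u, _, hu2⟩ := P'.partition x
    exact (hu2 c ⟨hc, hxc⟩).trans (hu2 d ⟨hd, hxd⟩).symm
  have hnotE : ∀ c ∈ P'.chords, c ∉ R → ∀ x ∈ c, x ∉ E := by
    intro c hc hcR x hxc hxE
    rcases Finset.mem_sup.1 hxE with ⟨i, hiR, hxi⟩
    simp only [hRdef, Finset.mem_insert, Finset.mem_singleton] at hiR
    apply hcR
    simp only [hRdef, Finset.mem_insert, Finset.mem_singleton]
    rcases hiR with rfl | rfl
    · exact Or.inl (huniq hc he₁chords hxc hxi)
    · exact Or.inr (huniq hc he₂chords hxc hxi)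
  have hpre_notR : ∀ c ∈ P'.pre, c ∉ R := by
    intro c hc hcR
    simp only [hRdef, Finset.mem_insert, Finset.mem_singleton] at hcR
    rcases hcR with rfl | rfl
    · exact he₁pre hc
    · exact he₂pre hc
  have hpre_notE : ∀ c ∈ P'.pre, ∀ x ∈ c, x ∉ E := fun c hc =>
    hnotE c (P'.pre_sub hc) (hpre_notR c hc)
  -- the chord correspondence Φ
  have hfwd' : ∀ c : Finset (Fin (2 * (m + 2))), ∃ c' : Finset (Fin (2 * m)),
      c ∈ P'.chords → c ∉ R → (c' ∈ P.chords ∧ c.image (ren E) = c'.image Fin.val ∧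
        (c ∈ P'.pre ↔ c' ∈ P.pre)) := by
    intro c
    by_cases hc : c ∈ P'.chords ∧ c ∉ R
    · obtain ⟨c', h1, h2, h3, _⟩ := hfwd c hc.1 hc.2
      exact ⟨c', fun _ _ => ⟨h1, h2, h3⟩⟩
    · exact ⟨∅, fun h1 h2 => absurd ⟨h1, h2⟩ hc⟩
  choose Φ hΦ using hfwd'
  have hΦmem : ∀ c ∈ P'.chords, c ∉ R → Φ c ∈ P.chords := fun c hc hcR => ((hΦ c) hc hcR).1
  have hΦimg : ∀ c ∈ P'.chords, c ∉ R → c.image (ren E) = (Φ c).image Fin.val :=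
    fun c hc hcR => ((hΦ c) hc hcR).2.1
  have hΦpre : ∀ c ∈ P'.chords, c ∉ R → (c ∈ P'.pre ↔ Φ c ∈ P.pre) :=
    fun c hc hcR => ((hΦ c) hc hcR).2.2
  have hΦchar : ∀ c ∈ P'.chords, c ∉ R → ∀ c' : Finset (Fin (2 * m)),
      c.image (ren E) = c'.image Fin.val → Φ c = c' := by
    intro c hc hcR c' h
    apply Finset.image_injective Fin.val_injective
    rw [← hΦimg c hc hcR, h]
  have himg_inj : ∀ c d : Finset (Fin (2 * (m + 2))),
      (∀ x ∈ c, x ∉ E) → (∀ x ∈ d, x ∉ E) → c.image (ren E) = d.image (ren E) → c = d := by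
    intro c d hc hd h
    apply Finset.ext
    intro x
    constructor
    · intro hx
      have hh : ren E x ∈ d.image (ren E) := h ▸ Finset.mem_image_of_mem _ hx
      obtain ⟨y, hy, hyx⟩ := Finset.mem_image.1 hh
      exact (R2Aux.ren_inj (hd y hy) (hc x hx) hyx) ▸ hy
    · intro hx
      have hh : ren E x ∈ c.image (ren E) := h ▸ Finset.mem_image_of_mem _ hx
      obtain ⟨y, hy, hyx⟩ := Finset.mem_image.1 hh
      exact (R2Aux.ren_inj (hc y hy) (hd x hx) hyx) ▸ hy
  have hΦinj : ∀ c ∈ P'.chords, ∀ d ∈ P'.chords, c ∉ R → d ∉ R → Φ c = Φ d → c = d := by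
    intro c hc d hd hcR hdR h
    exact himg_inj c d (hnotE c hc hcR) (hnotE d hd hdR)
      (by rw [hΦimg c hc hcR, hΦimg d hd hdR, h])
  have hInterlace : ∀ c ∈ P'.chords, ∀ d ∈ P'.chords, c ∉ R → d ∉ R →
      (Interlaced c d ↔ Interlaced (Φ c) (Φ d)) := by
    intro c hc d hd hcR hdR
    exact R2Aux.interlaced_transfer (hnotE c hc hcR) (hnotE d hd hdR)
      (P'.two_mem c hc) (P'.two_mem d hd) (hΦimg c hc hcR) (hΦimg d hd hdR)
  -- e₁ vs e₂ interlacement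
  have hE12 : ∀ c ∈ P'.pre, (Interlaced c e₁ ↔ Interlaced c e₂) := by
    intro c hc
    obtain ⟨u, v, huv, hcuv⟩ := Finset.card_eq_two.1 (P'.two_mem c (P'.pre_sub hc))
    have huE : u ∉ E := hpre_notE c hc u (by rw [hcuv]; simp)
    have hvE : v ∉ E := hpre_notE c hc v (by rw [hcuv]; simp)
    have hu1 : u ≠ a := fun h => huE ((hEmem u).2 (Or.inl h))
    have hu2 : u ≠ csucc a := fun h => huE ((hEmem u).2 (Or.inr (Or.inl h)))
    have hu3 : u ≠ b := fun h => huE ((hEmem u).2 (Or.inr (Or.inr (Or.inl h))))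
    have hu4 : u ≠ csucc b := fun h => huE ((hEmem u).2 (Or.inr (Or.inr (Or.inr h))))
    have hv1 : v ≠ a := fun h => hvE ((hEmem v).2 (Or.inl h))
    have hv2 : v ≠ csucc a := fun h => hvE ((hEmem v).2 (Or.inr (Or.inl h)))
    have hv3 : v ≠ b := fun h => hvE ((hEmem v).2 (Or.inr (Or.inr (Or.inl h))))
    have hv4 : v ≠ csucc b := fun h => hvE ((hEmem v).2 (Or.inr (Or.inr (Or.inr h))))
    have ca1 : CycBtw u a v ↔ CycBtw u (csucc a) v := R2Aux.cycBtw_csucc hu1 hu2 hv1 hv2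
    have ca2 : CycBtw v a u ↔ CycBtw v (csucc a) u := R2Aux.cycBtw_csucc hv1 hv2 hu1 hu2
    have cb1 : CycBtw u b v ↔ CycBtw u (csucc b) v := R2Aux.cycBtw_csucc hu3 hu4 hv3 hv4
    have cb2 : CycBtw v b u ↔ CycBtw v (csucc b) u := R2Aux.cycBtw_csucc hv3 hv4 hu3 hu4
    rw [hcuv, he₁def, he₂def,
      R2Aux.interlaced_pair huv, R2Aux.interlaced_pair huv,
      R2Aux.pair_filter_card a (csucc b) hne_acb, R2Aux.pair_filter_card a (csucc b) hne_acb,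
      R2Aux.pair_filter_card (csucc a) b hne_cab, R2Aux.pair_filter_card (csucc a) b hne_cab]
    simp only [ca1, ca2, ← cb1, ← cb2]
  -- pLabel is preserved
  have hpl : ∀ c ∈ P'.pre, P'.pLabel c = P.pLabel (Φ c) := by
    intro c hc
    have hcch := P'.pre_sub hc
    have hcR := hpre_notR c hc
    have hsplit := Finset.card_filter_add_card_filter_not
      (s := P'.classicalChords.filter (fun d => Interlaced c d)) (p := fun d => d ∈ R)
    have hTS : ((P'.classicalChords.filter (fun d => Interlaced c d)).filter
        (fun d => ¬ d ∈ R)).card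
        = (P.classicalChords.filter (fun d => Interlaced (Φ c) d)).card := by
      apply Finset.card_bij (fun d _ => Φ d)
      · intro d hd
        obtain ⟨hd', hdR⟩ := Finset.mem_filter.1 hd
        obtain ⟨hdcl, hdint⟩ := Finset.mem_filter.1 hd'
        have hdcl' : d ∈ P'.chords \ P'.pre := hdcl
        have hdch : d ∈ P'.chords := (Finset.mem_sdiff.1 hdcl').1
        have hdpre : d ∉ P'.pre := (Finset.mem_sdiff.1 hdcl').2
        refine Finset.mem_filter.2 ⟨?_, (hInterlace c hcch d hdch hcR hdR).1 hdint⟩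
        show Φ d ∈ P.chords \ P.pre
        exact Finset.mem_sdiff.2 ⟨hΦmem d hdch hdR,
          fun h => hdpre ((hΦpre d hdch hdR).2 h)⟩
      · intro d₁ h₁ d₂ h₂ h
        obtain ⟨h₁', h₁R⟩ := Finset.mem_filter.1 h₁
        obtain ⟨h₂', h₂R⟩ := Finset.mem_filter.1 h₂
        have hd₁cl : d₁ ∈ P'.chords \ P'.pre := (Finset.mem_filter.1 h₁').1
        have hd₂cl : d₂ ∈ P'.chords \ P'.pre := (Finset.mem_filter.1 h₂').1
        exact hΦinj d₁ (Finset.mem_sdiff.1 hd₁cl).1 d₂ (Finset.mem_sdiff.1 hd₂cl).1 h₁R h₂R h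
      · intro d' hd'
        obtain ⟨hd'cl, hd'int⟩ := Finset.mem_filter.1 hd'
        have hd'cl' : d' ∈ P.chords \ P.pre := hd'cl
        have hd'ch : d' ∈ P.chords := (Finset.mem_sdiff.1 hd'cl').1
        have hd'pre : d' ∉ P.pre := (Finset.mem_sdiff.1 hd'cl').2
        obtain ⟨d, hdch, hdR, hdimg⟩ := hbwd d' hd'ch
        have hΦd : Φ d = d' := hΦchar d hdch hdR d' hdimg
        have hdpre : d ∉ P'.pre := fun h => hd'pre (hΦd ▸ (hΦpre d hdch hdR).1 h)
        refine ⟨d, ?_, hΦd⟩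
        refine Finset.mem_filter.2 ⟨Finset.mem_filter.2 ⟨?_, ?_⟩, hdR⟩
        · show d ∈ P'.chords \ P'.pre
          exact Finset.mem_sdiff.2 ⟨hdch, hdpre⟩
        · exact (hInterlace c hcch d hdch hcR hdR).2 (hΦd ▸ hd'int)
    have hRcardeven : ∃ k, ((P'.classicalChords.filter (fun d => Interlaced c d)).filter
        (fun d => d ∈ R)).card = 2 * k := by
      by_cases h : Interlaced c e₁
      · refine ⟨1, ?_⟩
        have heq : (P'.classicalChords.filter (fun d => Interlaced c d)).filter
            (fun d => d ∈ R) = {e₁, e₂} := by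
          apply Finset.ext; intro d
          simp only [Finset.mem_filter, Finset.mem_insert, Finset.mem_singleton, hRdef]
          constructor
          · rintro ⟨_, hdR⟩; exact hdR
          · rintro (rfl | rfl)
            · exact ⟨⟨he₁, h⟩, Or.inl rfl⟩
            · exact ⟨⟨he₂, (hE12 c hc).1 h⟩, Or.inr rfl⟩
        have he12 : e₁ ≠ e₂ := by
          intro hh
          have ha2 : a ∈ e₂ := hh ▸ (by rw [he₁def]; simp)
          rw [he₂def] at ha2
          simp only [Finset.mem_insert, Finset.mem_singleton] at ha2
          rcases ha2 with h' | h'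
          · exact hcsucc_ne a h'
          · exact hne_ab h'
        rw [heq, Finset.card_insert_of_notMem (by simp [he12]), Finset.card_singleton]
      · refine ⟨0, ?_⟩
        simp only [Nat.mul_zero, Finset.card_eq_zero]
        apply Finset.filter_eq_empty_iff.2
        intro d hd
        simp only [hRdef, Finset.mem_insert, Finset.mem_singleton]
        rintro (rfl | rfl)
        · exact h (Finset.mem_filter.1 hd).2
        · exact h ((hE12 c hc).2 (Finset.mem_filter.1 hd).2)
    obtain ⟨k, hk⟩ := hRcardeven
    unfold PGD.pLabel
    rw [← hsplit, hk, hTS]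
    push_cast
    have h2 : (2 : ZMod 2) = 0 := by decide
    rw [h2, zero_mul, zero_add]
  -- preEndpoints correspondence
  have hmemPE : ∀ c ∈ P'.pre, ∀ x ∈ c, x ∈ P'.preEndpoints := by
    intro c hc x hx
    unfold PGD.preEndpoints
    exact Finset.mem_sup.2 ⟨c, hc, hx⟩
  have hPEnotE : ∀ x ∈ P'.preEndpoints, x ∉ E := by
    intro x hx
    unfold PGD.preEndpoints at hx
    obtain ⟨c, hcpre, hxc⟩ := Finset.mem_sup.1 hx
    exact hpre_notE c hcpre x hxc
  have hPE : P.preEndpoints.image Fin.val = P'.preEndpoints.image (ren E) := by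
    apply Finset.ext; intro k
    simp only [Finset.mem_image, PGD.preEndpoints, Finset.mem_sup, id_eq]
    constructor
    · rintro ⟨x', ⟨c', hc', hx'⟩, rfl⟩
      obtain ⟨c, hcch, hcR, hcimg⟩ := hbwd c' (P.pre_sub hc')
      have hΦc : Φ c = c' := hΦchar c hcch hcR c' hcimg
      have hx : x'.val ∈ c.image (ren E) := by
        rw [hcimg]; exact Finset.mem_image_of_mem _ hx'
      obtain ⟨x, hxc, hxe⟩ := Finset.mem_image.1 hx
      have hcpre : c ∈ P'.pre := (hΦpre c hcch hcR).2 (hΦc ▸ hc')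
      exact ⟨x, ⟨c, hcpre, hxc⟩, hxe⟩
    · rintro ⟨x, ⟨c, hcpre, hxc⟩, rfl⟩
      have hcch := P'.pre_sub hcpre
      have hcR := hpre_notR c hcpre
      have hx : ren E x ∈ (Φ c).image Fin.val := by
        rw [← hΦimg c hcch hcR]; exact Finset.mem_image_of_mem _ hxc
      obtain ⟨x', hx'c, hx'e⟩ := Finset.mem_image.1 hx
      exact ⟨x', ⟨Φ c, (hΦpre c hcch hcR).1 hcpre, hx'c⟩, hx'e⟩
  have hidx : ∀ x ∈ P'.preEndpoints, ∀ x' : Fin (2 * m), x'.val = ren E x →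
      P.idx x' = P'.idx x := by
    intro x hx x' hx'
    have hxE := hPEnotE x hx
    have hexψ : ∀ y, y ∈ P'.preEndpoints →
        ∃ y' : Fin (2 * m), y' ∈ P.preEndpoints ∧ y'.val = ren E y := by
      intro y hy
      have hh : ren E y ∈ P.preEndpoints.image Fin.val := by
        rw [hPE]; exact Finset.mem_image_of_mem _ hy
      obtain ⟨y', h1, h2⟩ := Finset.mem_image.1 hh
      exact ⟨y', h1, h2⟩
    choose ψ hψmem hψval using hexψ
    unfold PGD.idx
    apply Eq.symm
    apply Finset.card_bij (fun y hy => ψ y (Finset.mem_filter.1 hy).1)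
    · intro y hy
      obtain ⟨hy1, hy2⟩ := Finset.mem_filter.1 hy
      refine Finset.mem_filter.2 ⟨hψmem y hy1, ?_⟩
      have hlt : ren E y < ren E x := R2Aux.ren_lt_ren (hPEnotE y hy1) hy2
      rw [Fin.lt_def, hψval y hy1, hx']
      exact hlt
    · intro y₁ h₁ y₂ h₂ h
      have e1 := hψval y₁ (Finset.mem_filter.1 h₁).1
      have e2 := hψval y₂ (Finset.mem_filter.1 h₂).1
      exact R2Aux.ren_inj (hPEnotE _ (Finset.mem_filter.1 h₁).1)
        (hPEnotE _ (Finset.mem_filter.1 h₂).1) (by rw [← e1, ← e2, h])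
    · intro y' hy'
      obtain ⟨hy'1, hy'2⟩ := Finset.mem_filter.1 hy'
      have hh : y'.val ∈ P'.preEndpoints.image (ren E) := by
        rw [← hPE]; exact Finset.mem_image_of_mem _ hy'1
      obtain ⟨y, hy, hye⟩ := Finset.mem_image.1 hh
      have hylt : y < x := by
        rw [← R2Aux.ren_lt_iff (hPEnotE y hy) hxE, hye, ← hx']
        exact Fin.lt_def.1 hy'2
      refine ⟨y, Finset.mem_filter.2 ⟨hy, hylt⟩, ?_⟩
      apply Fin.val_injective
      rw [hψval y hy, hye]
  have hpts : P'.preEndpoints.card = P.preEndpoints.card := by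
    have h1 : P.preEndpoints.card = (P.preEndpoints.image Fin.val).card :=
      (Finset.card_image_of_injective _ Fin.val_injective).symm
    rw [h1, hPE, Finset.card_image_of_injOn]
    intro y hy z hz h
    exact R2Aux.ren_inj (hPEnotE y (Finset.mem_coe.1 hy)) (hPEnotE z (Finset.mem_coe.1 hz)) h
  have hchord_idx : ∀ c ∈ P'.pre, (Φ c).image P.idx = c.image P'.idx := by
    intro c hc
    have hcch := P'.pre_sub hc
    have hcR := hpre_notR c hc
    apply Finset.ext; intro k
    simp only [Finset.mem_image]
    constructor
    · rintro ⟨x', hx', rfl⟩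
      have hh : x'.val ∈ c.image (ren E) := by
        rw [hΦimg c hcch hcR]; exact Finset.mem_image_of_mem _ hx'
      obtain ⟨x, hxc, hxe⟩ := Finset.mem_image.1 hh
      exact ⟨x, hxc, (hidx x (hmemPE c hc x hxc) x' hxe.symm).symm⟩
    · rintro ⟨x, hxc, rfl⟩
      have hh : ren E x ∈ (Φ c).image Fin.val := by
        rw [← hΦimg c hcch hcR]; exact Finset.mem_image_of_mem _ hxc
      obtain ⟨x', hx', hxe⟩ := Finset.mem_image.1 hh
      exact ⟨x', hx', hidx x (hmemPE c hc x hxc) x' hxe⟩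
  have hch : P'.pre.image (fun c => c.image P'.idx) = P.pre.image (fun c => c.image P.idx) := by
    apply Finset.ext; intro s
    simp only [Finset.mem_image]
    constructor
    · rintro ⟨c, hc, rfl⟩
      exact ⟨Φ c, (hΦpre c (P'.pre_sub hc) (hpre_notR c hc)).1 hc, hchord_idx c hc⟩
    · rintro ⟨c', hc', rfl⟩
      obtain ⟨c, hcch, hcR, hcimg⟩ := hbwd c' (P.pre_sub hc')
      have hΦc : Φ c = c' := hΦchar c hcch hcR c' hcimg
      have hcpre : c ∈ P'.pre := (hΦpre c hcch hcR).2 (hΦc ▸ hc')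
      exact ⟨c, hcpre, by rw [← hΦc]; exact (hchord_idx c hcpre).symm⟩
  have hlab : ∀ s : Finset ℕ,
      (∑ c ∈ P'.pre.filter (fun c => c.image P'.idx = s), P'.pLabel c) =
      ∑ c ∈ P.pre.filter (fun c => c.image P.idx = s), P.pLabel c := by
    intro s
    apply Finset.sum_bij (fun c _ => Φ c)
    · intro c hc
      obtain ⟨hc1, hc2⟩ := Finset.mem_filter.1 hc
      exact Finset.mem_filter.2 ⟨(hΦpre c (P'.pre_sub hc1) (hpre_notR c hc1)).1 hc1,
        by rw [hchord_idx c hc1, hc2]⟩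
    · intro c₁ h₁ c₂ h₂ h
      have m₁ := (Finset.mem_filter.1 h₁).1
      have m₂ := (Finset.mem_filter.1 h₂).1
      exact hΦinj c₁ (P'.pre_sub m₁) c₂ (P'.pre_sub m₂) (hpre_notR c₁ m₁) (hpre_notR c₂ m₂) h
    · intro c' hc'
      obtain ⟨hc'1, hc'2⟩ := Finset.mem_filter.1 hc'
      obtain ⟨c, hcch, hcR, hcimg⟩ := hbwd c' (P.pre_sub hc'1)
      have hΦc : Φ c = c' := hΦchar c hcch hcR c' hcimg
      have hcpre : c ∈ P'.pre := (hΦpre c hcch hcR).2 (hΦc ▸ hc'1)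
      refine ⟨c, Finset.mem_filter.2 ⟨hcpre, ?_⟩, hΦc⟩
      rw [← hchord_idx c hcpre, hΦc, hc'2]
    · intro c hc
      exact hpl c (Finset.mem_filter.1 hc).1
  have hIh : P'.Ihmap = P.Ihmap := by
    simp only [PGD.Ihmap, LCD.mk.injEq]
    exact ⟨hpts, hch, funext hlab⟩
  rw [hIh]
  exact Relation.EqvGen.refl _
end
end

section
/- The map I_h is invariant under the Reidemeister 3 move: let {p, p+1}, {q, q+1}, {r, r+1} be three pairwise disjoint pairs of cyclically adjacent points of Fin(2m) whose union equals the union of three classical chords of P, and let P′ be obtained from P by applying to all chord endpoints the permutation transposing p ↔ p+1, q ↔ q+1 and r ↔ r+1, keeping all markings and signs. Then I_h(P′) and I_h(P) are equivalent ℤ/2-labeled chord diagrams (in fact equal). -/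
/-!
Formalization framework for pseudo-Gauss diagrams (Gauss diagrams of
virtual pseudoknots), the interlacement-based invariants `I` and `I_h`,
and the Gauss-diagrammatic Reidemeister moves.
-/

noncomputable section
open scoped Classical

/-- Sliding a point across its cyclic successor does not change membership in an
open cyclic interval whose endpoints avoid both points. -/
lemma cycBtw_csucc {n : ℕ} (a b x : Fin n) (ha : a ≠ x) (ha' : a ≠ csucc x)
    (hb : b ≠ x) (hb' : b ≠ csucc x) : CycBtw a (csucc x) b ↔ CycBtw a x b := by
  have hxn := x.isLt
  have han := a.isLt
  have hbn := b.isLt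
  have hav : a.val ≠ x.val := fun h => ha (Fin.ext h)
  have hbv : b.val ≠ x.val := fun h => hb (Fin.ext h)
  have hav' : a.val ≠ (x.val + 1) % n := fun h => ha' (Fin.ext h)
  have hbv' : b.val ≠ (x.val + 1) % n := fun h => hb' (Fin.ext h)
  have hs : (csucc x).val = (x.val + 1) % n := rfl
  simp only [CycBtw, Fin.lt_def, hs]
  rcases Nat.lt_or_ge (x.val + 1) n with hc | hc
  · rw [Nat.mod_eq_of_lt hc] at hav' hbv' ⊢
    split_ifs <;> omega
  · have hx1 : x.val + 1 = n := by omega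
    rw [hx1, Nat.mod_self] at hav' hbv' ⊢
    split_ifs <;> omega

lemma cycBtw_swap {n : ℕ} (a b u x : Fin n) (ha : a ≠ u) (ha' : a ≠ csucc u)
    (hb : b ≠ u) (hb' : b ≠ csucc u) :
    CycBtw a (Equiv.swap u (csucc u) x) b ↔ CycBtw a x b := by
  rcases eq_or_ne x u with rfl | hxu
  · rw [Equiv.swap_apply_left]; exact cycBtw_csucc a b x ha ha' hb hb'
  rcases eq_or_ne x (csucc u) with rfl | hxu'
  · rw [Equiv.swap_apply_right]; exact (cycBtw_csucc a b u ha ha' hb hb').symm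
  · rw [Equiv.swap_apply_of_ne_of_ne hxu hxu']

/-- `I_h` is invariant under the Reidemeister 3 move: if `P'`
is obtained from `P` by the R3 move (transposing `p ↔ p+1`, `q ↔ q+1`, `r ↔ r+1`
within three pairwise disjoint pairs of cyclically adjacent points whose union
is the union of three classical chords, keeping all markings and signs), then
`I_h(P')` and `I_h(P)` are equivalent `ℤ/2`-labeled chord diagrams — in fact
equal. -/
theorem Ihmap_invariant_R3 {m : ℕ} (P P' : PGD m) (p q r : Fin (2 * m))
    (h : R3Hyp P P' p q r) :
    P'.Ihmap = P.Ihmap ∧ LCDEquiv P'.Ihmap P.Ihmap := by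
  obtain ⟨hpq, hpr, hqr, ⟨c₁, hc₁, c₂, hc₂, c₃, hc₃, hS⟩, hch, hpre, hsg⟩ := h
  set σ := tripleSwap p q r with hσdef
  -- σ is injective
  have hσ : Function.Injective σ := by
    intro x y hxy
    simp only [hσdef, tripleSwap] at hxy
    exact (Equiv.swap r (csucc r)).injective
      ((Equiv.swap q (csucc q)).injective ((Equiv.swap p (csucc p)).injective hxy))
  -- endpoints of prechords avoid the six moved points
  have hpreS : ∀ c ∈ P.pre, ∀ x ∈ c,
      x ∉ (({p, csucc p} ∪ {q, csucc q} ∪ {r, csucc r}) : Finset (Fin (2 * m))) := by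
    intro c hc x hx hxS
    rw [hS] at hxS
    have hxc : ∃ cᵢ, cᵢ ∈ P.classicalChords ∧ x ∈ cᵢ := by
      simp only [Finset.mem_union] at hxS
      rcases hxS with (h1 | h2) | h3
      exacts [⟨c₁, hc₁, h1⟩, ⟨c₂, hc₂, h2⟩, ⟨c₃, hc₃, h3⟩]
    obtain ⟨cᵢ, hcᵢ, hxcᵢ⟩ := hxc
    have hcᵢ' := Finset.mem_sdiff.mp hcᵢ
    obtain ⟨u, hu, huniq⟩ := P.partition x
    have e1 : c = u := huniq c ⟨P.pre_sub hc, hx⟩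
    have e2 : cᵢ = u := huniq cᵢ ⟨hcᵢ'.1, hxcᵢ⟩
    exact hcᵢ'.2 (e2 ▸ e1 ▸ hc)
  have hpreS' : ∀ c ∈ P.pre, ∀ x ∈ c,
      x ≠ p ∧ x ≠ csucc p ∧ x ≠ q ∧ x ≠ csucc q ∧ x ≠ r ∧ x ≠ csucc r := by
    intro c hc x hx
    have := hpreS c hc x hx
    simp only [Finset.mem_union, Finset.mem_insert, Finset.mem_singleton, not_or] at this
    tauto
  -- σ fixes every prechord
  have himg : ∀ c ∈ P.pre, c.image σ = c := by
    intro c hc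
    have : ∀ x ∈ c, σ x = x := by
      intro x hx
      obtain ⟨h1, h2, h3, h4, h5, h6⟩ := hpreS' c hc x hx
      simp only [hσdef, tripleSwap]
      rw [Equiv.swap_apply_of_ne_of_ne h5 h6, Equiv.swap_apply_of_ne_of_ne h3 h4,
        Equiv.swap_apply_of_ne_of_ne h1 h2]
    rw [Finset.image_congr (fun x hx => this x hx), Finset.image_id']
  have hpreEq : P'.pre = P.pre := by
    rw [hpre]
    ext c
    simp only [Finset.mem_image]
    constructor
    · rintro ⟨d, hd, rfl⟩; rwa [himg d hd]
    · intro hc; exact ⟨c, hc, himg c hc⟩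
  -- classical chords of P' are the σ-images of those of P
  have hfinj : Function.Injective (fun c : Finset (Fin (2 * m)) => c.image σ) :=
    Finset.image_injective hσ
  have hpre' : P'.pre = P.pre.image (fun c => c.image σ) := hpre
  have hclass : P'.classicalChords = P.classicalChords.image (fun c => c.image σ) := by
    unfold PGD.classicalChords
    rw [hch, hpre', ← Finset.image_sdiff _ _ hfinj]
  -- interlacement with a prechord is preserved
  have hcycσ : ∀ c ∈ P.pre, ∀ a ∈ c, ∀ b ∈ c, ∀ x : Fin (2 * m),
      CycBtw a (σ x) b ↔ CycBtw a x b := by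
    intro c hc a ha b hb x
    obtain ⟨ha1, ha2, ha3, ha4, ha5, ha6⟩ := hpreS' c hc a ha
    obtain ⟨hb1, hb2, hb3, hb4, hb5, hb6⟩ := hpreS' c hc b hb
    simp only [hσdef, tripleSwap]
    rw [cycBtw_swap a b p _ ha1 ha2 hb1 hb2, cycBtw_swap a b q _ ha3 ha4 hb3 hb4,
      cycBtw_swap a b r _ ha5 ha6 hb5 hb6]
  have hinter : ∀ c ∈ P.pre, ∀ d : Finset (Fin (2 * m)),
      Interlaced c (d.image σ) ↔ Interlaced c d := by
    intro c hc d
    constructor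
    all_goals
      rintro ⟨a, b, hab, hcab, hcard⟩
      refine ⟨a, b, hab, hcab, ?_⟩
      have ha : a ∈ c := by rw [hcab]; simp
      have hb : b ∈ c := by rw [hcab]; simp
      have heq : ((d.image σ).filter fun x => CycBtw a x b).card
          = (d.filter fun x => CycBtw a x b).card := by
        rw [Finset.filter_image, Finset.card_image_of_injective _ hσ]
        congr 1
        exact Finset.filter_congr fun x _ => by
          simpa using hcycσ c hc a ha b hb x
      first
        | rw [heq] at hcard; exact hcard
        | rw [heq]; exact hcard
  -- pLabel is preserved on prechords
  have hplabel : ∀ c ∈ P.pre, P'.pLabel c = P.pLabel c := by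
    intro c hc
    unfold PGD.pLabel
    rw [hclass, Finset.filter_image, Finset.card_image_of_injective _ hfinj]
    congr 2
    exact Finset.filter_congr fun d _ => by simpa using hinter c hc d
  -- assemble
  have hE : P'.preEndpoints = P.preEndpoints := by
    unfold PGD.preEndpoints; rw [hpreEq]
  have hidx : P'.idx = P.idx := by
    unfold PGD.idx; rw [hE]
  have hmain : P'.Ihmap = P.Ihmap := by
    unfold PGD.Ihmap
    congr 1
    · rw [hE]
    · rw [hpreEq, hidx]
    · funext c'
      rw [hpreEq, hidx]
      exact Finset.sum_congr rfl fun c hc => hplabel c (Finset.mem_filter.mp hc).1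
  exact ⟨hmain, hmain ▸ Relation.EqvGen.refl _⟩
end
end
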